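/- arXiv:2006.03128 — 5 statements merged into one kernel-verified Lean document; each statement's English description precedes it below -/
import Mathlib

section
/- Given a matched pair of groupoids (G, H), the set G ⋈ H = {(x,h) : s_G(x) = r_H(h)} with multiplication (x,h)(y,g) = (x(h·y), h|_y g) (defined when r_G(y) = s_H(h)) and inverse (x,h)⁻¹ = (h⁻¹·x⁻¹, h⁻¹|_{x⁻¹}) is a groupoid. -/
/-- An algebraic (discrete) groupoid with unit space `U`:
a set `G` with a (totalized) partial multiplication, inversion,
unit embedding, and source/range maps.  All axioms involving
multiplication are guarded by composability `src x = rng y`. -/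
structure Gpd (G : Type*) (U : Type*) where
  mul : G → G → G
  inv : G → G
  unit : U → G
  src : G → U
  rng : G → U
  src_unit : ∀ u, src (unit u) = u
  rng_unit : ∀ u, rng (unit u) = u
  mul_assoc : ∀ x y z, src x = rng y → src y = rng z →
    mul (mul x y) z = mul x (mul y z)
  src_mul : ∀ x y, src x = rng y → src (mul x y) = src y
  rng_mul : ∀ x y, src x = rng y → rng (mul x y) = rng x
  unit_mul : ∀ x, mul (unit (rng x)) x = x
  mul_unit : ∀ x, mul x (unit (src x)) = x
  inv_mul : ∀ x, mul (inv x) x = unit (src x)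
  mul_inv : ∀ x, mul x (inv x) = unit (rng x)
  src_inv : ∀ x, src (inv x) = rng x
  rng_inv : ∀ x, rng (inv x) = src x

/-- A matched pair of groupoids `(G, H)` with common unit space `U`:
an `H`-action `act h x` (meaningful when `src h = rng x`) and a
`G`-restriction `res h x`, satisfying axioms (ZS1)–(ZS9). -/
structure MatchedPair (G : Type*) (H : Type*) (U : Type*) where
  gd : Gpd G U
  hd : Gpd H U
  act : H → G → G
  res : H → G → H
  zs1 : ∀ h₁ h₂ x, hd.src h₁ = hd.rng h₂ → hd.src h₂ = gd.rng x →
    act (hd.mul h₁ h₂) x = act h₁ (act h₂ x)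
  zs2 : ∀ h x, hd.src h = gd.rng x → gd.rng (act h x) = hd.rng h
  zs3 : ∀ x, act (hd.unit (gd.rng x)) x = x
  zs4 : ∀ h x y, hd.src h = gd.rng x → gd.src x = gd.rng y →
    res h (gd.mul x y) = res (res h x) y
  zs5 : ∀ h x, hd.src h = gd.rng x → hd.src (res h x) = gd.src x
  zs6 : ∀ h, res h (gd.unit (hd.src h)) = h
  zs7 : ∀ h x, hd.src h = gd.rng x → gd.src (act h x) = hd.rng (res h x)
  zs8 : ∀ h x y, hd.src h = gd.rng x → gd.src x = gd.rng y →
    act h (gd.mul x y) = gd.mul (act h x) (act (res h x) y)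
  zs9 : ∀ h₁ h₂ x, hd.src h₁ = hd.rng h₂ → hd.src h₂ = gd.rng x →
    res (hd.mul h₁ h₂) x = hd.mul (res h₁ (act h₂ x)) (res h₂ x)

/-!
Read `(x, h)` as the formal product `x h`; the rule `h y = (h·y) h|_y` then forces the
multiplication `(x, h)(y, g) = (x (h·y), h|_y g)`. Associativity holds coordinatewise: in `G` by
(ZS1) and (ZS8), in `H` by (ZS4) and (ZS9). For units and inverses, the action fixes units and
restricting a unit gives a unit: by (ZS8)/(ZS6) and (ZS9)/(ZS3) both maps send idempotents to
idempotents, and the only idempotents of a groupoid are its units.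
-/

namespace Gpd

variable {G U : Type*} (gd : Gpd G U)

theorem eq_unit_of_mul_self {a : G} (hs : gd.src a = gd.rng a) (ha : gd.mul a a = a) :
    a = gd.unit (gd.src a) :=
  calc a = gd.mul (gd.mul (gd.inv a) a) a := by rw [gd.inv_mul, hs, gd.unit_mul]
    _ = gd.mul (gd.inv a) (gd.mul a a) := gd.mul_assoc _ _ _ (gd.src_inv a) hs
    _ = gd.unit (gd.src a) := by rw [ha, gd.inv_mul]

theorem unit_mul_unit_s4 (u : U) : gd.mul (gd.unit u) (gd.unit u) = gd.unit u := by
  simpa only [gd.rng_unit] using gd.unit_mul (gd.unit u)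

end Gpd

namespace MatchedPair

variable {G H U : Type*} (M : MatchedPair G H U)

theorem act_unit (h : H) : M.act h (M.gd.unit (M.hd.src h)) = M.gd.unit (M.hd.rng h) := by
  have hc : M.hd.src h = M.gd.rng (M.gd.unit (M.hd.src h)) := (M.gd.rng_unit _).symm
  have hsrc : M.gd.src (M.act h (M.gd.unit (M.hd.src h))) = M.hd.rng h := by
    rw [M.zs7 _ _ hc, M.zs6]
  have hrng := M.zs2 _ _ hc
  have hidem := M.zs8 h _ _ hc (by rw [M.gd.src_unit, M.gd.rng_unit])
  rw [M.gd.unit_mul_unit_s4, M.zs6] at hidem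
  simpa only [hsrc] using M.gd.eq_unit_of_mul_self (hsrc.trans hrng.symm) hidem.symm

theorem res_unit (x : G) : M.res (M.hd.unit (M.gd.rng x)) x = M.hd.unit (M.gd.src x) := by
  have hc : M.hd.src (M.hd.unit (M.gd.rng x)) = M.gd.rng x := M.hd.src_unit _
  have hsrc := M.zs5 _ _ hc
  have hrng : M.hd.rng (M.res (M.hd.unit (M.gd.rng x)) x) = M.gd.src x := by
    rw [← M.zs7 _ _ hc, M.zs3]
  have hidem := M.zs9 _ _ x (by rw [M.hd.src_unit, M.hd.rng_unit]) hc
  rw [M.hd.unit_mul_unit_s4, M.zs3] at hidem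
  simpa only [hsrc] using M.hd.eq_unit_of_mul_self (hsrc.trans hrng.symm) hidem.symm

abbrev ZappaSzep : Type _ := {p : G × H // M.gd.src p.1 = M.hd.rng p.2}

def mulPair (a b : G × H) : G × H :=
  (M.gd.mul a.1 (M.act a.2 b.1), M.hd.mul (M.res a.2 b.1) b.2)

def invPair (a : G × H) : G × H :=
  (M.act (M.hd.inv a.2) (M.gd.inv a.1), M.res (M.hd.inv a.2) (M.gd.inv a.1))

section Pairs

variable {M} {x y z : G} {h g k : H}

theorem rng_mulPair (hp : M.gd.src x = M.hd.rng h) (hc : M.hd.src h = M.gd.rng y) :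
    M.gd.rng (M.mulPair (x, h) (y, g)).1 = M.gd.rng x :=
  M.gd.rng_mul _ _ (by rw [hp, M.zs2 _ _ hc])

theorem src_mulPair (hq : M.gd.src y = M.hd.rng g) (hc : M.hd.src h = M.gd.rng y) :
    M.hd.src (M.mulPair (x, h) (y, g)).2 = M.hd.src g :=
  M.hd.src_mul _ _ (by rw [M.zs5 _ _ hc, hq])

theorem mulPair_mem (hp : M.gd.src x = M.hd.rng h) (hq : M.gd.src y = M.hd.rng g)
    (hc : M.hd.src h = M.gd.rng y) :
    M.gd.src (M.mulPair (x, h) (y, g)).1 = M.hd.rng (M.mulPair (x, h) (y, g)).2 := by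
  rw [mulPair, M.gd.src_mul _ _ (by rw [hp, M.zs2 _ _ hc]),
    M.hd.rng_mul _ _ (by rw [M.zs5 _ _ hc, hq]), M.zs7 _ _ hc]

theorem mulPair_assoc (hp : M.gd.src x = M.hd.rng h) (hq : M.gd.src y = M.hd.rng g)
    (hr : M.gd.src z = M.hd.rng k) (hpq : M.hd.src h = M.gd.rng y)
    (hqr : M.hd.src g = M.gd.rng z) :
    M.mulPair (M.mulPair (x, h) (y, g)) (z, k) = M.mulPair (x, h) (M.mulPair (y, g) (z, k)) := by
  have hres : M.hd.src (M.res h y) = M.hd.rng g := (M.zs5 h y hpq).trans hq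
  have hyz : M.gd.src y = M.gd.rng (M.act g z) := by rw [hq, M.zs2 g z hqr]
  have hresy : M.hd.src (M.res h y) = M.gd.rng (M.act g z) := by rw [M.zs5 h y hpq, hyz]
  refine Prod.ext ?_ ?_
  · calc M.gd.mul (M.gd.mul x (M.act h y)) (M.act (M.hd.mul (M.res h y) g) z)
        = M.gd.mul x (M.gd.mul (M.act h y) (M.act (M.res h y) (M.act g z))) := by
          rw [M.zs1 _ _ _ hres hqr]
          exact M.gd.mul_assoc _ _ _ (by rw [hp, M.zs2 h y hpq])
            (by rw [M.zs7 h y hpq, M.zs2 _ _ hresy])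
      _ = M.gd.mul x (M.act h (M.gd.mul y (M.act g z))) := by rw [M.zs8 h y _ hpq hyz]
  · calc M.hd.mul (M.res (M.hd.mul (M.res h y) g) z) k
        = M.hd.mul (M.res (M.res h y) (M.act g z)) (M.hd.mul (M.res g z) k) := by
          rw [M.zs9 _ _ _ hres hqr]
          exact M.hd.mul_assoc _ _ _ (by rw [M.zs5 _ _ hresy, M.zs7 g z hqr])
            (by rw [M.zs5 g z hqr, hr])
      _ = M.hd.mul (M.res h (M.gd.mul y (M.act g z))) (M.hd.mul (M.res g z) k) := by
          rw [M.zs4 h y _ hpq hyz]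

theorem unit_mulPair (hp : M.gd.src x = M.hd.rng h) :
    M.mulPair (M.gd.unit (M.gd.rng x), M.hd.unit (M.gd.rng x)) (x, h) = (x, h) := by
  simp only [mulPair, M.zs3, M.gd.unit_mul, M.res_unit, hp, M.hd.unit_mul]

theorem mulPair_unit (hp : M.gd.src x = M.hd.rng h) :
    M.mulPair (x, h) (M.gd.unit (M.hd.src h), M.hd.unit (M.hd.src h)) = (x, h) := by
  simp only [mulPair, M.act_unit, ← hp, M.gd.mul_unit, M.zs6, M.hd.mul_unit]

theorem invPair_mulPair (hp : M.gd.src x = M.hd.rng h) :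
    M.mulPair (M.invPair (x, h)) (x, h) = (M.gd.unit (M.hd.src h), M.hd.unit (M.hd.src h)) := by
  have hc : M.hd.src (M.hd.inv h) = M.gd.rng (M.gd.inv x) := by
    rw [M.hd.src_inv, M.gd.rng_inv, hp]
  have hx : M.gd.src x = M.hd.src (M.hd.inv h) := by rw [M.hd.src_inv, hp]
  refine Prod.ext ?_ ?_
  · rw [mulPair, invPair, ← M.zs8 _ _ _ hc (M.gd.src_inv x), M.gd.inv_mul, hx, M.act_unit,
      M.hd.rng_inv]
  · rw [mulPair, invPair, ← M.zs4 _ _ _ hc (M.gd.src_inv x), M.gd.inv_mul, hx, M.zs6,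
      M.hd.inv_mul]

theorem mulPair_invPair (hp : M.gd.src x = M.hd.rng h) :
    M.mulPair (x, h) (M.invPair (x, h)) = (M.gd.unit (M.gd.rng x), M.hd.unit (M.gd.rng x)) := by
  have hc : M.hd.src (M.hd.inv h) = M.gd.rng (M.gd.inv x) := by
    rw [M.hd.src_inv, M.gd.rng_inv, hp]
  have hh : M.hd.src h = M.hd.rng (M.hd.inv h) := (M.hd.rng_inv h).symm
  have hx : M.hd.rng h = M.gd.rng (M.gd.inv x) := by rw [M.gd.rng_inv, hp]
  refine Prod.ext ?_ ?_
  · rw [mulPair, invPair, ← M.zs1 _ _ _ hh hc, M.hd.mul_inv, hx, M.zs3, M.gd.mul_inv]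
  · rw [mulPair, invPair, ← M.zs9 _ _ _ hh hc, M.hd.mul_inv, hx, M.res_unit, M.gd.src_inv]

theorem src_invPair (hp : M.gd.src x = M.hd.rng h) :
    M.hd.src (M.invPair (x, h)).2 = M.gd.rng x := by
  rw [invPair, M.zs5 _ _ (by rw [M.hd.src_inv, M.gd.rng_inv, hp]), M.gd.src_inv]

theorem rng_invPair (hp : M.gd.src x = M.hd.rng h) :
    M.gd.rng (M.invPair (x, h)).1 = M.hd.src h := by
  rw [invPair, M.zs2 _ _ (by rw [M.hd.src_inv, M.gd.rng_inv, hp]), M.hd.rng_inv]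

theorem invPair_mem (hp : M.gd.src x = M.hd.rng h) :
    M.gd.src (M.invPair (x, h)).1 = M.hd.rng (M.invPair (x, h)).2 :=
  M.zs7 _ _ (by rw [M.hd.src_inv, M.gd.rng_inv, hp])

end Pairs

open Classical in
/-- Products of non-composable pairs are junk: `zsMul p q = p`. -/
noncomputable def zsMul (p q : M.ZappaSzep) : M.ZappaSzep :=
  if hc : M.hd.src p.1.2 = M.gd.rng q.1.1 then ⟨M.mulPair p.1 q.1, mulPair_mem p.2 q.2 hc⟩
  else p

def zsInv (p : M.ZappaSzep) : M.ZappaSzep := ⟨M.invPair p.1, invPair_mem p.2⟩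

def zsUnit (u : U) : M.ZappaSzep :=
  ⟨(M.gd.unit u, M.hd.unit u), by rw [M.gd.src_unit, M.hd.rng_unit]⟩

variable {M}

theorem zsMul_val {p q : M.ZappaSzep} (hc : M.hd.src p.1.2 = M.gd.rng q.1.1) :
    (M.zsMul p q).1 = M.mulPair p.1 q.1 := by
  rw [zsMul, dif_pos hc]

variable (M)

noncomputable def zappaSzep : Gpd M.ZappaSzep U where
  mul := M.zsMul
  inv := M.zsInv
  unit := M.zsUnit
  src p := M.hd.src p.1.2
  rng p := M.gd.rng p.1.1
  src_unit := M.hd.src_unit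
  rng_unit := M.gd.rng_unit
  mul_assoc p q r hpq hqr := by
    have hpq_r : M.hd.src (M.zsMul p q).1.2 = M.gd.rng r.1.1 := by
      rw [zsMul_val hpq, src_mulPair q.2 hpq, hqr]
    have hp_qr : M.hd.src p.1.2 = M.gd.rng (M.zsMul q r).1.1 := by
      rw [zsMul_val hqr, rng_mulPair q.2 hqr, hpq]
    exact Subtype.ext <| by
      rw [zsMul_val hpq_r, zsMul_val hp_qr, zsMul_val hpq, zsMul_val hqr,
        mulPair_assoc p.2 q.2 r.2 hpq hqr]
  src_mul p q hc := by rw [zsMul_val hc, src_mulPair q.2 hc]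
  rng_mul p q hc := by rw [zsMul_val hc, rng_mulPair p.2 hc]
  unit_mul p := Subtype.ext <| by
    rw [zsMul_val (M.hd.src_unit _)]
    exact unit_mulPair p.2
  mul_unit p := Subtype.ext <| by
    rw [zsMul_val (M.gd.rng_unit _).symm]
    exact mulPair_unit p.2
  inv_mul p := Subtype.ext <| by
    rw [zsMul_val (src_invPair p.2)]
    exact invPair_mulPair p.2
  mul_inv p := Subtype.ext <| by
    rw [zsMul_val (rng_invPair p.2).symm]
    exact mulPair_invPair p.2
  src_inv p := src_invPair p.2
  rng_inv p := rng_invPair p.2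

end MatchedPair

/-- The Zappa–Szép product `G ⋈ H = {(x,h) : s_G(x) = r_H(h)}` of a matched pair,
with multiplication `(x,h)(y,g) = (x(h·y), h|_y g)` (defined when `r_G(y) = s_H(h)`)
and inverse `(x,h)⁻¹ = (h⁻¹·x⁻¹, h⁻¹|_{x⁻¹})`, is a groupoid (over the common unit
space `U`): there is a groupoid structure on this set whose composability relation,
multiplication (on composable pairs) and inversion are given by these formulas. -/
theorem zs_product_is_groupoid {G H U : Type*} (M : MatchedPair G H U) :
    ∃ Z : Gpd {p : G × H // M.gd.src p.1 = M.hd.rng p.2} U,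
      (∀ p q : {p : G × H // M.gd.src p.1 = M.hd.rng p.2},
        (Z.src p = Z.rng q ↔ M.gd.rng q.val.1 = M.hd.src p.val.2)) ∧
      (∀ p q : {p : G × H // M.gd.src p.1 = M.hd.rng p.2},
        M.gd.rng q.val.1 = M.hd.src p.val.2 →
        (Z.mul p q).val =
          (M.gd.mul p.val.1 (M.act p.val.2 q.val.1),
           M.hd.mul (M.res p.val.2 q.val.1) q.val.2)) ∧
      (∀ p : {p : G × H // M.gd.src p.1 = M.hd.rng p.2},
        (Z.inv p).val =
          (M.act (M.hd.inv p.val.2) (M.gd.inv p.val.1),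
           M.res (M.hd.inv p.val.2) (M.gd.inv p.val.1))) := by
  exact ⟨M.zappaSzep, fun _ _ => eq_comm, fun _ _ hc => MatchedPair.zsMul_val hc.symm,
    fun _ => rfl⟩
end

section
/- Let (G,H) be a matched pair of étale groupoids, B a Fell bundle over G with (G,H)-compatible H-action β, and assume each unit fibre B_u is unital with unit 1_u. Then Ψ(z,h) = (z·1_{r_H(h)}, h) defines an isometric homomorphism from the trivial line Fell bundle ℂ × H over H into B ⋈_β H, covariant with the embedding h ↦ (r_H(h), h) of H into G ⋈ H: Ψ is multiplicative, *-preserving, and fibrewise isometric. -/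
theorem Gpd.unit_mul_unit {G U : Type*} (γ : Gpd G U) (u : U) :
    γ.mul (γ.unit u) (γ.unit u) = γ.unit u := by
  have h := γ.mul_unit (γ.unit u)
  rwa [γ.src_unit] at h

theorem Gpd.inv_unit {G U : Type*} (γ : Gpd G U) (u : U) :
    γ.inv (γ.unit u) = γ.unit u := by
  have h1 := γ.unit_mul (γ.inv (γ.unit u))
  rw [γ.rng_inv, γ.src_unit] at h1
  have h2 := γ.mul_inv (γ.unit u)
  rw [γ.rng_unit] at h2
  rw [← h1, h2]

theorem Gpd.idem_eq_unit {G U : Type*} (γ : Gpd G U) (e : G)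
    (hee : γ.src e = γ.rng e) (hid : γ.mul e e = e) : e = γ.unit (γ.src e) := by
  have key := γ.mul_assoc (γ.inv e) e e (γ.src_inv e) hee
  have lhs : γ.mul (γ.mul (γ.inv e) e) e = e := by
    rw [γ.inv_mul, hee, γ.unit_mul]
  have rhs : γ.mul (γ.inv e) (γ.mul e e) = γ.unit (γ.src e) := by
    rw [hid, γ.inv_mul]
  exact lhs.symm.trans (key.trans rhs)

/-- (ZS10): `h · s_H(h) = r_H(h)`. -/
theorem MatchedPair.act_src_unit {G H U : Type*} (M : MatchedPair G H U) (h : H) :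
    M.act h (M.gd.unit (M.hd.src h)) = M.gd.unit (M.hd.rng h) := by
  have hcomp : M.hd.src h = M.gd.rng (M.gd.unit (M.hd.src h)) := (M.gd.rng_unit _).symm
  have hsr : M.gd.src (M.gd.unit (M.hd.src h)) = M.gd.rng (M.gd.unit (M.hd.src h)) := by
    rw [M.gd.src_unit, M.gd.rng_unit]
  have hxx : M.gd.mul (M.gd.unit (M.hd.src h)) (M.gd.unit (M.hd.src h))
      = M.gd.unit (M.hd.src h) := M.gd.unit_mul_unit _
  have h8 := M.zs8 h _ _ hcomp hsr
  rw [hxx, M.zs6 h] at h8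
  have hre : M.gd.rng (M.act h (M.gd.unit (M.hd.src h))) = M.hd.rng h := M.zs2 h _ hcomp
  have hse : M.gd.src (M.act h (M.gd.unit (M.hd.src h))) = M.hd.rng h := by
    rw [M.zs7 h _ hcomp, M.zs6 h]
  have hid := M.gd.idem_eq_unit (M.act h (M.gd.unit (M.hd.src h)))
      (hse.trans hre.symm) h8.symm
  rw [hse] at hid
  exact hid

/-- A Fell bundle over the groupoid `G` of a matched pair, in fibred form:
Banach-space fibres `B x`, a (totalized) fibred multiplication and involution
with axioms (F1)–(F10), guarded by composability; cross-fibre equalities are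
expressed via `HEq`. -/
structure FellBdl {G H U : Type*} (M : MatchedPair G H U) (B : G → Type*)
    [∀ x, NormedAddCommGroup (B x)] [∀ x, NormedSpace ℂ (B x)] where
  fmul : ∀ {x y : G}, B x → B y → B (M.gd.mul x y)
  fstar : ∀ {x : G}, B x → B (M.gd.inv x)
  fmul_add : ∀ {x y : G} (a : B x) (b c : B y), M.gd.src x = M.gd.rng y →
    fmul a (b + c) = fmul a b + fmul a c
  add_fmul : ∀ {x y : G} (a b : B x) (c : B y), M.gd.src x = M.gd.rng y →
    fmul (a + b) c = fmul a c + fmul b c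
  smul_fmul : ∀ {x y : G} (z : ℂ) (a : B x) (b : B y), M.gd.src x = M.gd.rng y →
    fmul (z • a) b = z • fmul a b
  fmul_smul : ∀ {x y : G} (z : ℂ) (a : B x) (b : B y), M.gd.src x = M.gd.rng y →
    fmul a (z • b) = z • fmul a b
  fmul_assoc : ∀ {x y z : G} (a : B x) (b : B y) (c : B z),
    M.gd.src x = M.gd.rng y → M.gd.src y = M.gd.rng z →
    HEq (fmul (fmul a b) c) (fmul a (fmul b c))
  norm_fmul_le : ∀ {x y : G} (a : B x) (b : B y), M.gd.src x = M.gd.rng y →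
    ‖fmul a b‖ ≤ ‖a‖ * ‖b‖
  fstar_add : ∀ {x : G} (a b : B x), fstar (a + b) = fstar a + fstar b
  fstar_smul : ∀ {x : G} (z : ℂ) (a : B x),
    fstar (z • a) = (starRingEnd ℂ z) • fstar a
  fstar_fmul : ∀ {x y : G} (a : B x) (b : B y), M.gd.src x = M.gd.rng y →
    HEq (fstar (fmul a b)) (fmul (fstar b) (fstar a))
  fstar_fstar : ∀ {x : G} (a : B x), HEq (fstar (fstar a)) a
  norm_fstar : ∀ {x : G} (a : B x), ‖fstar a‖ = ‖a‖
  norm_fstar_fmul : ∀ {x : G} (a : B x), ‖fmul (fstar a) a‖ = ‖a‖ ^ 2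
  pos : ∀ {x : G} (a : B x), ∃ c : B (M.gd.unit (M.gd.src x)),
    HEq (fmul (fstar c) c) (fmul (fstar a) a)

/-- A `(G,H)`-compatible `H`-action `β` on a Fell bundle `B` over `G`,
satisfying (A1)–(A5). -/
structure CompatAction {G H U : Type*} (M : MatchedPair G H U) (B : G → Type*)
    [∀ x, NormedAddCommGroup (B x)] [∀ x, NormedSpace ℂ (B x)]
    (F : FellBdl M B) where
  β : ∀ (h : H) {x : G}, B x → B (M.act h x)
  β_add : ∀ (h : H) {x : G} (a b : B x), M.hd.src h = M.gd.rng x →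
    β h (a + b) = β h a + β h b
  β_smul : ∀ (h : H) {x : G} (z : ℂ) (a : B x), M.hd.src h = M.gd.rng x →
    β h (z • a) = z • β h a
  β_mul : ∀ (g h : H) {x : G} (a : B x),
    M.hd.src g = M.hd.rng h → M.hd.src h = M.gd.rng x →
    HEq (β (M.hd.mul g h) a) (β g (β h a))
  β_unit : ∀ {x : G} (a : B x), HEq (β (M.hd.unit (M.gd.rng x)) a) a
  β_fmul : ∀ (h : H) {x y : G} (a : B x) (b : B y),
    M.hd.src h = M.gd.rng x → M.gd.src x = M.gd.rng y →
    HEq (β h (F.fmul a b)) (F.fmul (β h a) (β (M.res h x) b))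
  β_fstar : ∀ (h : H) {x : G} (a : B x), M.hd.src h = M.gd.rng x →
    HEq (F.fstar (β h a)) (β (M.res h x) (F.fstar a))

section ZSBundle

variable {G H U : Type*} (M : MatchedPair G H U) (B : G → Type*)
  [∀ x, NormedAddCommGroup (B x)] [∀ x, NormedSpace ℂ (B x)]
  (F : FellBdl M B) (A : CompatAction M B F)

/-- `B`-component of the multiplication of the Zappa–Szép product bundle
`B ⋈_β H`:  `(a,h) • (b,g) = (a β_h(b), h|_{p(b)} g)`.  An element of the fibre
of `B ⋈_β H` over `(x,h)` is recorded as its `B`-component `a : B x`. -/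
def zmulB {x y : G} (a : B x) (h : H) (b : B y) : B (M.gd.mul x (M.act h y)) :=
  F.fmul a (A.β h b)

/-- `H`-component of the multiplication of `B ⋈_β H`. -/
def zmulH (h : H) (y : G) (g : H) : H := M.hd.mul (M.res h y) g

/-- `B`-component of the involution of `B ⋈_β H`:
`(a,h)* = (β_{h⁻¹}(a*), h⁻¹|_{x⁻¹})` for `a ∈ B_x`. -/
def zstarB (h : H) {x : G} (a : B x) : B (M.act (M.hd.inv h) (M.gd.inv x)) :=
  A.β (M.hd.inv h) (F.fstar a)

/-- `H`-component of the involution of `B ⋈_β H`. -/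
def zstarH (x : G) (h : H) : H := M.res (M.hd.inv h) (M.gd.inv x)

end ZSBundle

section Helpers

variable {G H U : Type*} {M : MatchedPair G H U} {B : G → Type*}
  [∀ x, NormedAddCommGroup (B x)] [∀ x, NormedSpace ℂ (B x)]
  {F : FellBdl M B} (A : CompatAction M B F)

theorem beta_congr (h : H) {x y : G} (e : x = y) {a : B x} {b : B y}
    (hab : HEq a b) : HEq (A.β h a) (A.β h b) := by
  subst e; rw [eq_of_heq hab]

theorem fmul_congr (F : FellBdl M B) {x x' y y' : G} (ex : x = x') (ey : y = y')
    {a : B x} {a' : B x'} {b : B y} {b' : B y'}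
    (ha : HEq a a') (hb : HEq b b') : HEq (F.fmul a b) (F.fmul a' b') := by
  subst ex; subst ey; rw [eq_of_heq ha, eq_of_heq hb]

theorem fstar_congr (F : FellBdl M B) {x y : G} (e : x = y)
    {a : B x} {b : B y} (hab : HEq a b) : HEq (F.fstar a) (F.fstar b) := by
  subst e; rw [eq_of_heq hab]

theorem beta_congr₂ {g h : H} (e : g = h) {x : G} (a : B x) :
    HEq (A.β g a) (A.β h a) := by subst e; rfl

theorem smul_congr {x y : G} (e : x = y) (z : ℂ) {a : B x} {b : B y}
    (hab : HEq a b) : HEq (z • a) (z • b) := by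
  subst e; rw [eq_of_heq hab]

/-- `β h` maps the unit of `B_{s_H(h)}` to the unit of `B_{r_H(h)}`. -/
theorem beta_one (one : ∀ u : U, B (M.gd.unit u))
    (one_fmul : ∀ {x : G} (b : B x), HEq (F.fmul (one (M.gd.rng x)) b) b)
    (fmul_one : ∀ {x : G} (b : B x), HEq (F.fmul b (one (M.gd.src x))) b)
    (h : H) :
    HEq (A.β h (one (M.hd.src h))) (one (M.hd.rng h)) := by
  have hx : M.act h (M.gd.unit (M.hd.src h)) = M.gd.unit (M.hd.rng h) :=
    M.act_src_unit h
  have hx' : M.act (M.hd.inv h) (M.gd.unit (M.hd.rng h))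
      = M.gd.unit (M.hd.src h) := by
    have := M.act_src_unit (M.hd.inv h)
    rwa [M.hd.src_inv, M.hd.rng_inv] at this
  set u := M.hd.src h with hu
  set v := M.hd.rng h with hv
  set c := one v with hc
  set b := A.β (M.hd.inv h) c with hb
  -- β h b HEq c
  have h1 : HEq (A.β (M.hd.mul h (M.hd.inv h)) c) (A.β h (A.β (M.hd.inv h) c)) :=
    A.β_mul h (M.hd.inv h) c (M.hd.rng_inv h).symm
      (by rw [M.hd.src_inv, M.gd.rng_unit])
  have h2 : HEq (A.β (M.hd.mul h (M.hd.inv h)) c) c := by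
    rw [M.hd.mul_inv]
    have := A.β_unit (x := M.gd.unit v) c
    rwa [M.gd.rng_unit] at this
  have hβb : HEq (A.β h b) c := h1.symm.trans h2
  -- cast b to live over unit u
  set b' : B (M.gd.unit u) := cast (congrArg B hx') b with hb'
  have hbb' : HEq b' b := cast_heq _ b
  -- unit law under β h
  have h3 : HEq (A.β h (F.fmul (one u) b'))
      (F.fmul (A.β h (one u)) (A.β (M.res h (M.gd.unit u)) b')) :=
    A.β_fmul h (one u) b' (M.gd.rng_unit u).symm
      (by rw [M.gd.src_unit, M.gd.rng_unit])
  have hres : M.res h (M.gd.unit u) = h := by rw [hu]; exact M.zs6 h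
  replace h3 : HEq (A.β h (F.fmul (one u) b'))
      (F.fmul (A.β h (one u)) (A.β h b')) :=
    h3.trans (fmul_congr F rfl (by rw [hres]) (HEq.refl _) (beta_congr₂ A hres b'))
  have h4 : HEq (F.fmul (one u) b') b' := by
    have := one_fmul b'
    rwa [M.gd.rng_unit] at this
  have h5 : HEq (A.β h (F.fmul (one u) b')) (A.β h b') :=
    beta_congr A h (M.gd.unit_mul_unit u) h4
  have h6 : HEq (A.β h b') (A.β h b) := beta_congr A h hx'.symm hbb'
  -- so fmul (β h 1) (β h b') HEq c
  have h7 : HEq (F.fmul (A.β h (one u)) (A.β h b')) c :=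
    (h3.symm.trans h5).trans (h6.trans hβb)
  -- β h b' HEq one v
  have h8 : HEq (A.β h b') (one v) := (h6.trans hβb)
  -- fmul_one for β h (one u)
  have hs : M.gd.src (M.act h (M.gd.unit u)) = v := by rw [hx, M.gd.src_unit]
  have h9 : HEq (F.fmul (A.β h (one u))
      (one (M.gd.src (M.act h (M.gd.unit u))))) (A.β h (one u)) :=
    fmul_one (A.β h (one u))
  have h10 : HEq (one (M.gd.src (M.act h (M.gd.unit u)))) (A.β h b') := by
    have e1 : HEq (one (M.gd.src (M.act h (M.gd.unit u)))) (one v) := by rw [hs]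
    exact e1.trans h8.symm
  have h11 : HEq (F.fmul (A.β h (one u))
      (one (M.gd.src (M.act h (M.gd.unit u)))))
      (F.fmul (A.β h (one u)) (A.β h b')) :=
    fmul_congr F rfl (by rw [hs, hx]) (HEq.refl _) h10
  exact (h9.symm.trans h11).trans h7

/-- The involution fixes the units. -/
theorem fstar_one (F : FellBdl M B) (one : ∀ u : U, B (M.gd.unit u))
    (one_fmul : ∀ {x : G} (b : B x), HEq (F.fmul (one (M.gd.rng x)) b) b)
    (u : U) : HEq (F.fstar (one u)) (one u) := by
  set t := F.fstar (one u) with ht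
  have e1 : M.gd.inv (M.gd.unit u) = M.gd.unit u := M.gd.inv_unit u
  -- fstar_fmul on (one u) and t
  have s1 : HEq (F.fstar (F.fmul (one u) t)) (F.fmul (F.fstar t) (F.fstar (one u))) :=
    F.fstar_fmul (one u) t (by rw [M.gd.src_unit, M.gd.rng_inv, M.gd.src_unit])
  have s2 : HEq (F.fmul (one u) t) t := by
    have := one_fmul t
    rwa [M.gd.rng_inv, M.gd.src_unit] at this
  have s3 : HEq (F.fstar (F.fmul (one u) t)) (F.fstar t) :=
    fstar_congr F (by rw [e1, M.gd.unit_mul_unit]) s2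
  have s4 : HEq (F.fstar t) (one u) := F.fstar_fstar (one u)
  -- so one u HEq fmul (fstar t) t
  have s5 : HEq (one u) (F.fmul (F.fstar t) t) := (s4.symm.trans s3.symm).trans s1
  have s6 : HEq (F.fmul (F.fstar t) t) (F.fmul (one u) t) :=
    fmul_congr F (by rw [e1, e1]) rfl s4 (HEq.refl t)
  exact ((s5.trans s6).trans s2).symm

end Helpers

/-- Assume each unit fibre `B_u` is unital, with units `one u` satisfying the
usual identities.  Then `Ψ(z,h) = (z·1_{r_H(h)}, h)` is an isometric
homomorphism from the trivial line Fell bundle `ℂ × H` over `H` into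
`B ⋈_β H`, covariant with the embedding `h ↦ (r_H(h), h)` of `H` into `G ⋈ H`:
it is multiplicative, `*`-preserving, and fibrewise isometric. -/
theorem psi_embeds_H {G H U : Type*} (M : MatchedPair G H U)
    (B : G → Type*) [∀ x, NormedAddCommGroup (B x)] [∀ x, NormedSpace ℂ (B x)]
    (F : FellBdl M B) (A : CompatAction M B F)
    (one : ∀ u : U, B (M.gd.unit u))
    (one_fmul : ∀ {x : G} (b : B x), HEq (F.fmul (one (M.gd.rng x)) b) b)
    (fmul_one : ∀ {x : G} (b : B x), HEq (F.fmul b (one (M.gd.src x))) b)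
    (norm_one : ∀ u : U, ‖one u‖ = 1) :
    -- `(r_H(h), h) ∈ G ⋈ H`:
    (∀ h : H, M.gd.src (M.gd.unit (M.hd.rng h)) = M.hd.rng h) ∧
    -- multiplicativity `Ψ(z,h) • Ψ(w,k) = Ψ(zw, hk)` for composable `h, k`:
    (∀ (h k : H) (z w : ℂ), M.hd.src h = M.hd.rng k →
      HEq (zmulB M B F A (z • one (M.hd.rng h)) h (w • one (M.hd.rng k)))
          ((z * w) • one (M.hd.rng (M.hd.mul h k))) ∧
      zmulH M h (M.gd.unit (M.hd.rng k)) k = M.hd.mul h k) ∧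
    -- `*`-preservation `Ψ(z,h)* = Ψ(conj z, h⁻¹)`:
    (∀ (h : H) (z : ℂ),
      HEq (zstarB M B F A h (z • one (M.hd.rng h)))
          ((starRingEnd ℂ z) • one (M.hd.rng (M.hd.inv h))) ∧
      zstarH M (M.gd.unit (M.hd.rng h)) h = M.hd.inv h) ∧
    -- fibrewise isometry `‖Ψ(z,h)‖ = |z|`:
    (∀ (h : H) (z : ℂ), ‖z • one (M.hd.rng h)‖ = ‖z‖) := by
  refine ⟨fun h => M.gd.src_unit _, ?_, ?_, ?_⟩
  · -- multiplicativity
    intro h k z w hk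
    constructor
    · rw [← hk, M.hd.rng_mul h k hk]
      unfold zmulB
      have hx : M.act h (M.gd.unit (M.hd.src h)) = M.gd.unit (M.hd.rng h) :=
        M.act_src_unit h
      have c1 : A.β h (w • one (M.hd.src h)) = w • A.β h (one (M.hd.src h)) :=
        A.β_smul h w _ (M.gd.rng_unit _).symm
      rw [c1]
      have cond : M.gd.src (M.gd.unit (M.hd.rng h))
          = M.gd.rng (M.act h (M.gd.unit (M.hd.src h))) := by
        rw [M.gd.src_unit, M.zs2 h _ (M.gd.rng_unit _).symm]
      rw [F.fmul_smul w _ _ cond, F.smul_fmul z _ _ cond, smul_smul, mul_comm w z]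
      have eidx : M.gd.mul (M.gd.unit (M.hd.rng h)) (M.act h (M.gd.unit (M.hd.src h)))
          = M.gd.unit (M.hd.rng h) := by rw [hx, M.gd.unit_mul_unit]
      refine smul_congr (B := B) eidx (z * w) ?_
      have inner : HEq (F.fmul (one (M.hd.rng h)) (A.β h (one (M.hd.src h))))
          (F.fmul (one (M.hd.rng h)) (one (M.hd.rng h))) :=
        fmul_congr F rfl hx (HEq.refl _)
          (beta_one A one @one_fmul @fmul_one h)
      refine inner.trans ?_
      have := fmul_one (one (M.hd.rng h))
      rwa [M.gd.src_unit] at this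
    · unfold zmulH
      rw [← hk, M.zs6]
  · -- star preservation
    intro h z
    constructor
    · unfold zstarB
      have e1 : M.gd.inv (M.gd.unit (M.hd.rng h)) = M.gd.unit (M.hd.rng h) :=
        M.gd.inv_unit _
      rw [F.fstar_smul z (one (M.hd.rng h))]
      have c2 : A.β (M.hd.inv h) ((starRingEnd ℂ z) • F.fstar (one (M.hd.rng h)))
          = (starRingEnd ℂ z) • A.β (M.hd.inv h) (F.fstar (one (M.hd.rng h))) :=
        A.β_smul (M.hd.inv h) _ _
          (by rw [M.hd.src_inv, M.gd.rng_inv, M.gd.src_unit])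
      rw [c2]
      have hx : M.act (M.hd.inv h) (M.gd.unit (M.hd.rng h))
          = M.gd.unit (M.hd.rng (M.hd.inv h)) := by
        have := M.act_src_unit (M.hd.inv h)
        rwa [M.hd.src_inv] at this
      have eidx : M.act (M.hd.inv h) (M.gd.inv (M.gd.unit (M.hd.rng h)))
          = M.gd.unit (M.hd.rng (M.hd.inv h)) := by rw [e1, hx]
      refine smul_congr (B := B) eidx _ ?_
      have step1 : HEq (A.β (M.hd.inv h) (F.fstar (one (M.hd.rng h))))
          (A.β (M.hd.inv h) (one (M.hd.rng h))) :=
        beta_congr A (M.hd.inv h) e1 (fstar_one F one @one_fmul _)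
      refine step1.trans ?_
      have step2 : HEq (A.β (M.hd.inv h) (one (M.hd.src (M.hd.inv h))))
          (one (M.hd.rng (M.hd.inv h))) :=
        beta_one A one @one_fmul @fmul_one (M.hd.inv h)
      rwa [M.hd.src_inv] at step2
    · unfold zstarH
      rw [M.gd.inv_unit, ← M.hd.src_inv h, M.zs6]
  · -- isometry
    intro h z
    rw [norm_smul, norm_one, mul_one]
end

section
/- Let (Γ, Λ) be a matched pair of discrete groups, B a Fell bundle over Γ with (Γ,Λ)-compatible Λ-action β, and π a *-representation of B on a Hilbert space H. Define, on ℓ²(Γ ⋈ Λ) ⊗ H, Π(b)(δ_{(x,h)} ⊗ ξ) = δ_{(p(b)x, h)} ⊗ π(β(h⁻¹|_{(p(b)x)⁻¹}, b))ξ. Then each Π(b) is bounded with ‖Π(b)‖ ≤ ‖b‖, and Π is a *-representation of B: Π is fibrewise linear, Π(bc) = Π(b)Π(c), and Π(b*) = Π(b)*. -/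
/-- A matched pair of (discrete) groups `(Γ, Λ)`: a left `Λ`-action
`act : Λ → Γ → Γ` (written `h·x`) and a `Γ`-restriction `res : Λ → Γ → Λ`
(written `h|_x`) satisfying the Zappa–Szép axioms (ZS1)–(ZS9). -/
structure MatchedPairGrp (Γ Λ : Type*) [Group Γ] [Group Λ] where
  act : Λ → Γ → Γ
  res : Λ → Γ → Λ
  mul_act : ∀ g h x, act (g * h) x = act g (act h x)
  one_act : ∀ x, act 1 x = x
  act_one : ∀ h, act h 1 = 1
  res_one : ∀ h, res h 1 = h
  one_res : ∀ x, res 1 x = 1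
  res_mul : ∀ h x y, res h (x * y) = res (res h x) y
  act_mul : ∀ h x y, act h (x * y) = act h x * act (res h x) y
  mul_res : ∀ g h x, res (g * h) x = res g (act h x) * res h x

namespace MatchedPairGrp

variable {Γ Λ : Type*} [Group Γ] [Group Λ] (M : MatchedPairGrp Γ Λ)

theorem act_act_inv (h : Λ) (x : Γ) : M.act h (M.act h⁻¹ x) = x := by
  rw [← M.mul_act, mul_inv_cancel, M.one_act]

theorem res_act_inv (k : Λ) (z : Γ) :
    M.res k (M.act k⁻¹ z) = (M.res k⁻¹ z)⁻¹ := by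
  have h0 := M.mul_res k k⁻¹ z
  rw [mul_inv_cancel, M.one_res] at h0
  exact eq_inv_of_mul_eq_one_left h0.symm

theorem inv_act_eq (h : Λ) (x : Γ) :
    (M.act h x)⁻¹ = M.act (M.res h x) x⁻¹ := by
  have e : M.act h x * M.act (M.res h x) x⁻¹ = 1 := by
    rw [← M.act_mul, mul_inv_cancel, M.act_one]
  exact inv_eq_of_mul_eq_one_right e

/-- The base point of `σ*(x,h)` in the Zappa–Szép product bundle is again `x`. -/
theorem zs_star_base (x : Γ) (h : Λ) :
    M.act (M.res h⁻¹ x⁻¹)⁻¹ (M.act h⁻¹ x⁻¹)⁻¹ = x := by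
  rw [inv_act_eq M h⁻¹ x⁻¹, inv_inv, ← M.mul_act, inv_mul_cancel, M.one_act]

/-- Multiplication of the Zappa–Szép product group `Γ ⋈ Λ` (on `Γ × Λ`):
`(x,h)(y,k) = (x (h·y), h|_y k)`. -/
def zmul (p q : Γ × Λ) : Γ × Λ := (p.1 * M.act p.2 q.1, M.res p.2 q.1 * q.2)

/-- Inversion of the Zappa–Szép product group:
`(x,h)⁻¹ = (h⁻¹·x⁻¹, h⁻¹|_{x⁻¹})`. -/
def zinv (p : Γ × Λ) : Γ × Λ := (M.act p.2⁻¹ p.1⁻¹, M.res p.2⁻¹ p.1⁻¹)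

theorem res_inv_act (m : Λ) (x : Γ) :
    M.res m⁻¹ (M.act m x) = (M.res m x)⁻¹ := by
  have h0 := M.mul_res m⁻¹ m x
  rw [inv_mul_cancel, M.one_res] at h0
  exact eq_inv_of_mul_eq_one_left h0.symm

theorem zmul_zinv_cancel_left (p q : Γ × Λ) :
    M.zmul p (M.zmul (M.zinv p) q) = q := by
  obtain ⟨y, k⟩ := p
  obtain ⟨x, h⟩ := q
  simp only [zmul, zinv]
  have hw : M.act k (M.act k⁻¹ y⁻¹) = y⁻¹ := M.act_act_inv k y⁻¹
  have hm : M.res k (M.act k⁻¹ y⁻¹) = (M.res k⁻¹ y⁻¹)⁻¹ := M.res_act_inv k y⁻¹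
  refine Prod.ext ?_ ?_
  · show y * M.act k (M.act k⁻¹ y⁻¹ * M.act (M.res k⁻¹ y⁻¹) x) = x
    rw [M.act_mul, hw, hm, ← M.mul_act, inv_mul_cancel, M.one_act, mul_inv_cancel_left]
  · show M.res k (M.act k⁻¹ y⁻¹ * M.act (M.res k⁻¹ y⁻¹) x) * (M.res (M.res k⁻¹ y⁻¹) x * h) = h
    rw [M.res_mul, hm, res_inv_act, inv_mul_cancel_left]

end MatchedPairGrp

/-- A Fell bundle over the discrete group `Γ`, in fibred form: Banach-space
fibres `B x`, multiplication `B_x × B_y → B_{xy}`, involution `B_x → B_{x⁻¹}`,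
with axioms (F1)–(F9); cross-fibre equalities are stated via `HEq`. -/
structure FellBdlGrp (Γ : Type*) [Group Γ] (B : Γ → Type*)
    [∀ x, NormedAddCommGroup (B x)] [∀ x, NormedSpace ℂ (B x)] where
  fmul : ∀ {x y : Γ}, B x → B y → B (x * y)
  fstar : ∀ {x : Γ}, B x → B x⁻¹
  fmul_add : ∀ {x y : Γ} (a : B x) (b c : B y), fmul a (b + c) = fmul a b + fmul a c
  add_fmul : ∀ {x y : Γ} (a b : B x) (c : B y), fmul (a + b) c = fmul a c + fmul b c
  smul_fmul : ∀ {x y : Γ} (z : ℂ) (a : B x) (b : B y), fmul (z • a) b = z • fmul a b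
  fmul_smul : ∀ {x y : Γ} (z : ℂ) (a : B x) (b : B y), fmul a (z • b) = z • fmul a b
  fmul_assoc : ∀ {x y z : Γ} (a : B x) (b : B y) (c : B z),
    HEq (fmul (fmul a b) c) (fmul a (fmul b c))
  norm_fmul_le : ∀ {x y : Γ} (a : B x) (b : B y), ‖fmul a b‖ ≤ ‖a‖ * ‖b‖
  fstar_add : ∀ {x : Γ} (a b : B x), fstar (a + b) = fstar a + fstar b
  fstar_smul : ∀ {x : Γ} (z : ℂ) (a : B x), fstar (z • a) = (starRingEnd ℂ z) • fstar a
  fstar_fmul : ∀ {x y : Γ} (a : B x) (b : B y),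
    HEq (fstar (fmul a b)) (fmul (fstar b) (fstar a))
  fstar_fstar : ∀ {x : Γ} (a : B x), HEq (fstar (fstar a)) a
  norm_fstar : ∀ {x : Γ} (a : B x), ‖fstar a‖ = ‖a‖
  norm_fstar_fmul : ∀ {x : Γ} (a : B x), ‖fmul (fstar a) a‖ = ‖a‖ ^ 2

/-- A `(Γ,Λ)`-compatible `Λ`-action `β` on a Fell bundle over `Γ`,
satisfying (A1)–(A5). -/
structure CompatGrp {Γ Λ : Type*} [Group Γ] [Group Λ] (M : MatchedPairGrp Γ Λ)
    (B : Γ → Type*) [∀ x, NormedAddCommGroup (B x)] [∀ x, NormedSpace ℂ (B x)]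
    (F : FellBdlGrp Γ B) where
  β : ∀ (h : Λ) {x : Γ}, B x → B (M.act h x)
  β_add : ∀ (h : Λ) {x : Γ} (a b : B x), β h (a + b) = β h a + β h b
  β_smul : ∀ (h : Λ) {x : Γ} (z : ℂ) (a : B x), β h (z • a) = z • β h a
  β_mul : ∀ (g h : Λ) {x : Γ} (a : B x), HEq (β (g * h) a) (β g (β h a))
  β_one : ∀ {x : Γ} (a : B x), HEq (β 1 a) a
  β_fmul : ∀ (h : Λ) {x y : Γ} (a : B x) (b : B y),
    HEq (β h (F.fmul a b)) (F.fmul (β h a) (β (M.res h x) b))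
  β_fstar : ∀ (h : Λ) {x : Γ} (a : B x),
    HEq (F.fstar (β h a)) (β (M.res h x) (F.fstar a))

/-! `Π(b)` is a weighted shift on `ℓ²(Γ × Λ; H)`: it translates the `Γ`-coordinate by `x₀ = p(b)`
and acts on the `(z, k)` coordinate by `W_b(z, k) = π(β(k⁻¹|_{z⁻¹}, b))`, an operator of norm at
most `‖b‖` because `β` is isometric and `π` contractive. Weighted shifts with bounded weights are
bounded by the bound of the weights, compose by composing the shifts and multiplying the weights
along the orbit, and have as adjoint the inverse shift with the adjoint weights. So the
representation properties of `Π` reduce to identities for the weights. Since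
`k⁻¹|_{(x⁻¹z)⁻¹} = (k⁻¹|_{z⁻¹})|_x`, compatibility of `β` with the product,
`β_r(ab) = β_r(a) β_{r|_x}(b)`, gives `W_{ab}(z, k) = W_a(z, k) W_b(x⁻¹z, k)`; compatibility
with the involution gives `W_{a*}(z, k) = W_a(xz, k)*` in the same way. -/

open scoped ENNReal

namespace lp

section NormedSpace

variable {𝕜 I E : Type*} [RCLike 𝕜] [NormedAddCommGroup E] [NormedSpace 𝕜 E] {p : ℝ≥0∞}

theorem memℓp_diagonal {S : I → E →L[𝕜] E} (hS : ∃ C, ∀ i, ‖S i‖ ≤ C)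
    (f : lp (fun _ : I => E) p) : Memℓp (fun i => S i (f i)) p := by
  obtain ⟨C, hC⟩ := hS
  exact ((lp.memℓp f).norm.const_smul C).mono fun i => (S i).le_of_opNorm_le (hC i) (f i)

variable [Fact (1 ≤ p)]

theorem memℓp_comp_equiv (σ : I ≃ I) (f : lp (fun _ : I => E) p) : Memℓp (f ∘ σ) p := by
  rcases p.trichotomy with rfl | rfl | hp
  · exact absurd (Fact.out : (1 : ℝ≥0∞) ≤ 0) (by norm_num)
  · exact memℓp_infty ((lp.memℓp f).bddAbove.mono (Set.range_comp_subset_range σ fun j => ‖f j‖))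
  · exact memℓp_gen (((lp.memℓp f).summable hp).comp_injective σ.injective)

theorem norm_comp_equiv_le (σ : I ≃ I) (f : lp (fun _ : I => E) p) :
    ‖(⟨f ∘ σ, memℓp_comp_equiv σ f⟩ : lp (fun _ : I => E) p)‖ ≤ ‖f‖ := by
  have hp0 : p ≠ 0 := (zero_lt_one.trans_le Fact.out).ne'
  rcases p.trichotomy with rfl | rfl | hp
  · exact absurd rfl hp0
  · exact norm_le_of_forall_le (norm_nonneg f) fun i => norm_apply_le_norm hp0 f (σ i)
  · refine norm_le_of_tsum_le hp (norm_nonneg f) ?_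
    change ∑' i, ‖f (σ i)‖ ^ p.toReal ≤ _
    rw [σ.tsum_eq fun j => ‖f j‖ ^ p.toReal, norm_rpow_eq_tsum hp]

variable (𝕜) in
noncomputable def compEquivCLM (σ : I ≃ I) : lp (fun _ : I => E) p →L[𝕜] lp (fun _ : I => E) p :=
  LinearMap.mkContinuous
    { toFun f := ⟨f ∘ σ, memℓp_comp_equiv σ f⟩
      map_add' _ _ := rfl
      map_smul' _ _ := rfl }
    1 (fun f => (one_mul ‖f‖).symm ▸ norm_comp_equiv_le σ f)

theorem norm_compEquivCLM_le (σ : I ≃ I) :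
    ‖(compEquivCLM 𝕜 σ : lp (fun _ : I => E) p →L[𝕜] lp (fun _ : I => E) p)‖ ≤ 1 :=
  LinearMap.mkContinuous_norm_le _ zero_le_one _

theorem norm_diagonal_le {S : I → E →L[𝕜] E} {C : ℝ} (hC : 0 ≤ C) (hS : ∀ i, ‖S i‖ ≤ C)
    (f : lp (fun _ : I => E) p) :
    ‖(⟨fun i => S i (f i), memℓp_diagonal ⟨C, hS⟩ f⟩ : lp (fun _ : I => E) p)‖ ≤ C * ‖f‖ := by
  have hp0 : p ≠ 0 := (zero_lt_one.trans_le Fact.out).ne'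
  have hCnorm : ‖(C : 𝕜)‖ = C := by rw [RCLike.norm_ofReal, abs_of_nonneg hC]
  calc _ ≤ ‖(C : 𝕜) • f‖ := norm_mono hp0 fun i => by
          rw [coeFn_smul, Pi.smul_apply, norm_smul, hCnorm]
          exact (S i).le_of_opNorm_le (hS i) (f i)
    _ = C * ‖f‖ := by rw [norm_const_smul hp0, hCnorm]

noncomputable def diagonalCLM (S : I → E →L[𝕜] E) (hS : ∃ C, ∀ i, ‖S i‖ ≤ C) :
    lp (fun _ : I => E) p →L[𝕜] lp (fun _ : I => E) p :=
  LinearMap.mkContinuousOfExistsBound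
    { toFun f := ⟨fun i => S i (f i), memℓp_diagonal hS f⟩
      map_add' f g := lp.ext <| funext fun i => map_add (S i) (f i) (g i)
      map_smul' c f := lp.ext <| funext fun i => map_smul (S i) c (f i) }
    (hS.elim fun C hC => ⟨max C 0, norm_diagonal_le (le_max_right C 0)
      fun i => (hC i).trans (le_max_left C 0)⟩)

theorem norm_diagonalCLM_le {S : I → E →L[𝕜] E} {C : ℝ} (hC : 0 ≤ C) (hS : ∀ i, ‖S i‖ ≤ C) :
    ‖(diagonalCLM S ⟨C, hS⟩ : lp (fun _ : I => E) p →L[𝕜] lp (fun _ : I => E) p)‖ ≤ C :=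
  ContinuousLinearMap.opNorm_le_bound _ hC (norm_diagonal_le hC hS)

noncomputable def weightedShift (σ : I ≃ I) (S : I → E →L[𝕜] E) (hS : ∃ C, ∀ i, ‖S i‖ ≤ C) :
    lp (fun _ : I => E) p →L[𝕜] lp (fun _ : I => E) p :=
  (diagonalCLM S hS).comp (compEquivCLM 𝕜 σ)

variable {σ τ ρ : I ≃ I} {S R Q : I → E →L[𝕜] E} {hS : ∃ C, ∀ i, ‖S i‖ ≤ C}
  {hR : ∃ C, ∀ i, ‖R i‖ ≤ C} {hQ : ∃ C, ∀ i, ‖Q i‖ ≤ C}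

@[simp]
theorem weightedShift_apply (f : lp (fun _ : I => E) p) (i : I) :
    weightedShift σ S hS f i = S i (f (σ i)) := rfl

theorem norm_weightedShift_le {C : ℝ} (hC : 0 ≤ C) (hS : ∀ i, ‖S i‖ ≤ C) :
    ‖(weightedShift σ S ⟨C, hS⟩ : lp (fun _ : I => E) p →L[𝕜] lp (fun _ : I => E) p)‖ ≤ C :=
  calc _ ≤ C * 1 := (ContinuousLinearMap.opNorm_comp_le _ _).trans <|
          mul_le_mul (norm_diagonalCLM_le hC hS) (norm_compEquivCLM_le σ) (norm_nonneg _) hC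
    _ = C := mul_one C

theorem weightedShift_single [DecidableEq I] (j : I) (x : E) :
    weightedShift σ S hS (lp.single p j x) = lp.single p (σ.symm j) (S (σ.symm j) x) := by
  ext i
  simp only [weightedShift_apply, lp.single_apply, Pi.single_apply, ← σ.eq_symm_apply]
  split_ifs with h
  · rw [h]
  · exact map_zero (S i)

theorem weightedShift_eq_add (hQ_eq : ∀ i, Q i = S i + R i) :
    weightedShift σ Q hQ = (weightedShift σ S hS + weightedShift σ R hR :
      lp (fun _ : I => E) p →L[𝕜] lp (fun _ : I => E) p) := by
  ext f i
  simp [hQ_eq]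

theorem weightedShift_eq_smul (c : 𝕜) (hQ_eq : ∀ i, Q i = c • S i) :
    weightedShift σ Q hQ = (c • weightedShift σ S hS :
      lp (fun _ : I => E) p →L[𝕜] lp (fun _ : I => E) p) := by
  ext f i
  simp [hQ_eq]

theorem weightedShift_eq_mul (hρ : ∀ i, ρ i = τ (σ i)) (hQ_eq : ∀ i, Q i = S i * R (σ i)) :
    weightedShift ρ Q hQ = (weightedShift σ S hS * weightedShift τ R hR :
      lp (fun _ : I => E) p →L[𝕜] lp (fun _ : I => E) p) := by
  ext f i
  simp [hρ, hQ_eq]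

end NormedSpace

section InnerProductSpace

variable {𝕜 I E : Type*} [RCLike 𝕜] [NormedAddCommGroup E] [InnerProductSpace 𝕜 E]
  [CompleteSpace E] {σ τ : I ≃ I} {S R : I → E →L[𝕜] E} {hS : ∃ C, ∀ i, ‖S i‖ ≤ C}
  {hR : ∃ C, ∀ i, ‖R i‖ ≤ C}

theorem weightedShift_eq_adjoint (hτ : ∀ i, τ i = σ.symm i)
    (hR_eq : ∀ i, R i = ContinuousLinearMap.adjoint (S (σ.symm i))) :
    (weightedShift τ R hR : lp (fun _ : I => E) 2 →L[𝕜] lp (fun _ : I => E) 2) =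
      ContinuousLinearMap.adjoint (weightedShift σ S hS) := by
  refine (ContinuousLinearMap.eq_adjoint_iff _ _).2 fun f g => ?_
  rw [inner_eq_tsum, inner_eq_tsum]
  conv_rhs => rw [← σ.symm.tsum_eq]
  refine tsum_congr fun i => ?_
  simp [hτ, hR_eq, ContinuousLinearMap.adjoint_inner_left]

end InnerProductSpace

end lp

theorem apply_eq_apply_of_heq {α γ : Type*} {β : α → Type*} (f : ∀ a, β a → γ) {s t : α}
    (hst : s = t) {u : β s} {v : β t} (huv : HEq u v) : f s u = f t v := by
  subst hst
  rw [eq_of_heq huv]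

namespace CompatGrp

variable {Γ Λ : Type*} [Group Γ] [Group Λ] {M : MatchedPairGrp Γ Λ} {B : Γ → Type*}
  [∀ x, NormedAddCommGroup (B x)] [∀ x, NormedSpace ℂ (B x)] {F : FellBdlGrp Γ B}
  (A : CompatGrp M B F) {H : Type*} [NormedAddCommGroup H]

section NormedSpace

variable [NormedSpace ℂ H] (π : ∀ x : Γ, B x → (H →L[ℂ] H))

def twistedWeight {x₀ : Γ} (b : B x₀) (i : Γ × Λ) : H →L[ℂ] H :=
  π (M.act (M.res i.2⁻¹ i.1⁻¹) x₀) (A.β (M.res i.2⁻¹ i.1⁻¹) b)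

variable {A π}

theorem twistedWeight_add (hπ_add : ∀ (x : Γ) (a b : B x), π x (a + b) = π x a + π x b)
    {x₀ : Γ} (a b : B x₀) (i : Γ × Λ) :
    A.twistedWeight π (a + b) i = A.twistedWeight π a i + A.twistedWeight π b i := by
  rw [twistedWeight, A.β_add, hπ_add]
  rfl

theorem twistedWeight_smul (hπ_smul : ∀ (x : Γ) (z : ℂ) (a : B x), π x (z • a) = z • π x a)
    {x₀ : Γ} (c : ℂ) (a : B x₀) (i : Γ × Λ) :
    A.twistedWeight π (c • a) i = c • A.twistedWeight π a i := by
  rw [twistedWeight, A.β_smul, hπ_smul]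
  rfl

theorem norm_twistedWeight_le (hβ_iso : ∀ (h : Λ) (x : Γ) (a : B x), ‖A.β h a‖ = ‖a‖)
    (hπ_norm : ∀ (x : Γ) (a : B x), ‖π x a‖ ≤ ‖a‖) {x₀ : Γ} (b : B x₀) (i : Γ × Λ) :
    ‖A.twistedWeight π b i‖ ≤ ‖b‖ :=
  (hπ_norm _ _).trans (hβ_iso _ _ b).le

theorem twistedWeight_fmul
    (hπ_mul : ∀ (x y : Γ) (a : B x) (b : B y), π (x * y) (F.fmul a b) = π x a * π y b)
    {x y : Γ} (a : B x) (b : B y) (z : Γ) (k : Λ) :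
    A.twistedWeight π (F.fmul a b) (z, k) =
      A.twistedWeight π a (z, k) * A.twistedWeight π b (x⁻¹ * z, k) := by
  have hres : M.res k⁻¹ (x⁻¹ * z)⁻¹ = M.res (M.res k⁻¹ z⁻¹) x := by
    rw [mul_inv_rev, inv_inv, M.res_mul]
  simp only [twistedWeight]
  rw [hres, ← hπ_mul]
  exact apply_eq_apply_of_heq π (M.act_mul _ x y) (A.β_fmul _ a b)

end NormedSpace

variable {A} in
theorem twistedWeight_fstar [InnerProductSpace ℂ H] [CompleteSpace H]
    {π : ∀ x : Γ, B x → (H →L[ℂ] H)}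
    (hπ_star : ∀ (x : Γ) (a : B x), π x⁻¹ (F.fstar a) = ContinuousLinearMap.adjoint (π x a))
    {x : Γ} (a : B x) (z : Γ) (k : Λ) :
    A.twistedWeight π (F.fstar a) (z, k) =
      ContinuousLinearMap.adjoint (A.twistedWeight π a (x * z, k)) := by
  have hres : M.res k⁻¹ (x * z)⁻¹ = M.res (M.res k⁻¹ z⁻¹) x⁻¹ := by
    rw [mul_inv_rev, M.res_mul]
  have hr : M.res (M.res (M.res k⁻¹ z⁻¹) x⁻¹) x = M.res k⁻¹ z⁻¹ := by
    rw [← M.res_mul, inv_mul_cancel, M.res_one]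
  simp only [twistedWeight]
  rw [hres, ← hπ_star]
  refine apply_eq_apply_of_heq π (by rw [M.inv_act_eq, hr]) ?_
  exact (congr_arg_heq (fun h => A.β h (F.fstar a)) hr).symm.trans (A.β_fstar _ a).symm

end CompatGrp

section Stmt15

open scoped Classical

/-- Twisted amplification.  Let `(Γ, Λ)` be a matched pair of discrete groups,
`B` a Fell bundle over `Γ` with `(Γ,Λ)`-compatible `Λ`-action `β` (with each
`β_h` isometric), and `π` a `*`-representation of `B` on a Hilbert space `H`.
Then on `ℓ²(Γ ⋈ Λ) ⊗ H = ℓ²(Γ × Λ; H)` there are bounded operators `Π(b)`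
with `Π(b)(δ_{(x,h)} ⊗ ξ) = δ_{(p(b)x, h)} ⊗ π(β(h⁻¹|_{(p(b)x)⁻¹}, b)) ξ`,
`‖Π(b)‖ ≤ ‖b‖`, and `Π` is a `*`-representation of `B`: fibrewise linear,
multiplicative, and `*`-preserving. -/
theorem twisted_amplification {Γ Λ : Type*} [Group Γ] [Group Λ]
    (M : MatchedPairGrp Γ Λ)
    (B : Γ → Type*) [∀ x, NormedAddCommGroup (B x)] [∀ x, NormedSpace ℂ (B x)]
    (F : FellBdlGrp Γ B) (A : CompatGrp M B F)
    (hβ_iso : ∀ (h : Λ) (x : Γ) (a : B x), ‖A.β h a‖ = ‖a‖)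
    {H : Type*} [NormedAddCommGroup H] [InnerProductSpace ℂ H] [CompleteSpace H]
    (π : ∀ x : Γ, B x → (H →L[ℂ] H))
    (hπ_add : ∀ (x : Γ) (a b : B x), π x (a + b) = π x a + π x b)
    (hπ_smul : ∀ (x : Γ) (z : ℂ) (a : B x), π x (z • a) = z • π x a)
    (hπ_mul : ∀ (x y : Γ) (a : B x) (b : B y),
      π (x * y) (F.fmul a b) = π x a * π y b)
    (hπ_star : ∀ (x : Γ) (a : B x),
      π x⁻¹ (F.fstar a) = ContinuousLinearMap.adjoint (π x a))
    (hπ_norm : ∀ (x : Γ) (a : B x), ‖π x a‖ ≤ ‖a‖) :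
    ∃ PiAmp : ∀ x₀ : Γ, B x₀ →
        (lp (fun _ : Γ × Λ => H) 2 →L[ℂ] lp (fun _ : Γ × Λ => H) 2),
      -- defining formula on elementary tensors `δ_{(x,h)} ⊗ ξ`:
      (∀ (x₀ : Γ) (b : B x₀) (x : Γ) (h : Λ) (ξ : H),
        PiAmp x₀ b (lp.single 2 (x, h) ξ) =
          lp.single 2 (x₀ * x, h)
            (π (M.act (M.res h⁻¹ (x₀ * x)⁻¹) x₀)
              (A.β (M.res h⁻¹ (x₀ * x)⁻¹) b) ξ)) ∧
      -- boundedness: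
      (∀ (x₀ : Γ) (b : B x₀), ‖PiAmp x₀ b‖ ≤ ‖b‖) ∧
      -- fibrewise linearity:
      (∀ (x₀ : Γ) (a b : B x₀), PiAmp x₀ (a + b) = PiAmp x₀ a + PiAmp x₀ b) ∧
      (∀ (x₀ : Γ) (z : ℂ) (a : B x₀), PiAmp x₀ (z • a) = z • PiAmp x₀ a) ∧
      -- multiplicativity:
      (∀ (x y : Γ) (a : B x) (b : B y),
        PiAmp (x * y) (F.fmul a b) = PiAmp x a * PiAmp y b) ∧
      -- `*`-preservation:
      (∀ (x : Γ) (a : B x),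
        PiAmp x⁻¹ (F.fstar a) = ContinuousLinearMap.adjoint (PiAmp x a)) := by
  let σ (x₀ : Γ) : Γ × Λ ≃ Γ × Λ := (Equiv.mulLeft x₀⁻¹).prodCongr (Equiv.refl Λ)
  have hσ_symm (x₀ z : Γ) (k : Λ) : (σ x₀).symm (z, k) = (x₀ * z, k) := by simp [σ]
  refine ⟨fun x₀ b => lp.weightedShift (σ x₀) (A.twistedWeight π b)
      ⟨‖b‖, A.norm_twistedWeight_le hβ_iso hπ_norm b⟩, ?_, ?_, ?_, ?_, ?_, ?_⟩
  · intro x₀ b x h ξ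
    rw [lp.weightedShift_single, hσ_symm]
    rfl
  · exact fun x₀ b =>
      lp.norm_weightedShift_le (norm_nonneg b) (A.norm_twistedWeight_le hβ_iso hπ_norm b)
  · exact fun x₀ a b => lp.weightedShift_eq_add (A.twistedWeight_add hπ_add a b)
  · exact fun x₀ c a => lp.weightedShift_eq_smul c (A.twistedWeight_smul hπ_smul c a)
  · exact fun x y a b => lp.weightedShift_eq_mul (fun _ => Prod.ext (by simp [σ, mul_assoc]) rfl)
      fun i => A.twistedWeight_fmul hπ_mul a b i.1 i.2
  · refine fun x a => lp.weightedShift_eq_adjoint (fun i => ?_) fun i => ?_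
    · simp [σ]
    · rw [hσ_symm]
      exact A.twistedWeight_fstar hπ_star a i.1 i.2

end Stmt15
end

section
/- In the setting of the twisted amplification Π of a *-representation π of a Fell bundle B over Γ (matched pair of discrete groups (Γ, Λ)), the map M_h(δ_{(x,k)} ⊗ ξ) = δ_{(e,h)(x,k)} ⊗ ξ extends to a unitary on ℓ²(Γ ⋈ Λ) ⊗ H and h ↦ M_h is a unitary representation of Λ; moreover the covariance relation M_h Π(b) = Π(β(h,b)) M_{h|_{p(b)}} holds for all h ∈ Λ, b ∈ B. -/
section PermAux

open scoped Classical ENNReal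

variable {ι : Type*} {H : Type*} [NormedAddCommGroup H] [InnerProductSpace ℂ H]

theorem memℓp_comp_equiv (e : ι ≃ ι) (f : lp (fun _ : ι => H) 2) :
    Memℓp (fun i => f (e i)) 2 := by
  apply memℓp_gen
  exact (e.summable_iff (f := fun i => ‖f i‖ ^ (2 : ℝ≥0∞).toReal)).mpr
    ((lp.memℓp f).summable (by norm_num))

/-- The linear map on `ℓ²(ι, H)` induced by precomposition with an equiv. -/
noncomputable def permL (e : ι ≃ ι) :
    lp (fun _ : ι => H) 2 →ₗ[ℂ] lp (fun _ : ι => H) 2 where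
  toFun f := ⟨fun i => f (e i), memℓp_comp_equiv e f⟩
  map_add' f g := lp.ext (funext fun _ => rfl)
  map_smul' c f := lp.ext (funext fun _ => rfl)

theorem permL_apply (e : ι ≃ ι) (f : lp (fun _ : ι => H) 2) (i : ι) :
    (permL e f) i = f (e i) := rfl

theorem norm_permL (e : ι ≃ ι) (f : lp (fun _ : ι => H) 2) :
    ‖permL e f‖ = ‖f‖ := by
  have hp : (0 : ℝ) < (2 : ℝ≥0∞).toReal := by norm_num
  have h1 : ‖permL e f‖ ^ (2 : ℝ≥0∞).toReal = ‖f‖ ^ (2 : ℝ≥0∞).toReal := by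
    rw [lp.norm_rpow_eq_tsum hp, lp.norm_rpow_eq_tsum hp]
    exact e.tsum_eq fun i => ‖f i‖ ^ (2 : ℝ≥0∞).toReal
  exact Real.rpow_left_injOn hp.ne' (norm_nonneg _) (norm_nonneg _) h1

/-- The permutation operator on `ℓ²(ι, H)` induced by an equiv of the index set. -/
noncomputable def permCLM (e : ι ≃ ι) :
    lp (fun _ : ι => H) 2 →L[ℂ] lp (fun _ : ι => H) 2 :=
  LinearIsometry.toContinuousLinearMap ⟨permL e, norm_permL e⟩

theorem permCLM_apply (e : ι ≃ ι) (f : lp (fun _ : ι => H) 2) (i : ι) :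
    (permCLM e f) i = f (e i) := rfl

theorem norm_permCLM (e : ι ≃ ι) (f : lp (fun _ : ι => H) 2) :
    ‖permCLM e f‖ = ‖f‖ := norm_permL e f

theorem permCLM_mul (e e' : ι ≃ ι) :
    (permCLM (H := H) e) * permCLM e' = permCLM (e.trans e') := by
  refine ContinuousLinearMap.ext fun f => ?_
  refine lp.ext (funext fun i => ?_)
  rfl

theorem permCLM_refl : permCLM (H := H) (Equiv.refl ι) = 1 := by
  refine ContinuousLinearMap.ext fun f => ?_
  refine lp.ext (funext fun i => ?_)
  rfl

theorem permCLM_symm_single [DecidableEq ι] (e : ι ≃ ι) (i : ι) (ξ : H) :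
    permCLM e.symm (lp.single 2 i ξ) = lp.single 2 (e i) ξ := by
  refine lp.ext (funext fun j => ?_)
  rw [permCLM_apply]
  by_cases hj : j = e i
  · subst hj
    rw [e.symm_apply_apply, lp.single_apply_self, lp.single_apply_self]
  · have h2 : e.symm j ≠ i := fun hc => hj (by rw [← hc, e.apply_symm_apply])
    rw [lp.single_apply_ne (E := fun _ : ι => H) 2 i ξ h2,
      lp.single_apply_ne (E := fun _ : ι => H) 2 (e i) ξ hj]

theorem permCLM_adjoint [CompleteSpace H] (e : ι ≃ ι) :
    ContinuousLinearMap.adjoint (permCLM (H := H) e) = permCLM e.symm := by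
  symm
  rw [ContinuousLinearMap.eq_adjoint_iff]
  intro x y
  rw [lp.inner_eq_tsum, lp.inner_eq_tsum]
  have h1 : ∀ i, (inner (𝕜 := ℂ) ((x : ∀ _ : ι, H) (e.symm (e i))) ((y : ∀ _ : ι, H) (e i)))
      = inner (𝕜 := ℂ) ((x : ∀ _ : ι, H) i) ((permCLM e y : ∀ _ : ι, H) i) := fun i => by
    rw [e.symm_apply_apply]; rfl
  calc (∑' i, inner (𝕜 := ℂ) ((permCLM e.symm x : ∀ _ : ι, H) i) ((y : ∀ _ : ι, H) i))
      = ∑' i, inner (𝕜 := ℂ) ((x : ∀ _ : ι, H) (e.symm i)) ((y : ∀ _ : ι, H) i) := rfl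
    _ = ∑' i, inner (𝕜 := ℂ) ((x : ∀ _ : ι, H) i) ((permCLM e y : ∀ _ : ι, H) i) := by
        rw [← e.tsum_eq (fun i =>
          inner (𝕜 := ℂ) ((x : ∀ _ : ι, H) (e.symm i)) ((y : ∀ _ : ι, H) i))]
        exact tsum_congr h1

theorem clm_ext_single [DecidableEq ι] [CompleteSpace H]
    {T S : lp (fun _ : ι => H) 2 →L[ℂ] lp (fun _ : ι => H) 2}
    (h : ∀ (i : ι) (ξ : H), T (lp.single 2 i ξ) = S (lp.single 2 i ξ)) : T = S := by
  refine ContinuousLinearMap.ext fun f => ?_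
  have hf : HasSum (fun i : ι => lp.single 2 i ((f : ∀ _ : ι, H) i)) f :=
    lp.hasSum_single (by norm_num) f
  have hT := hf.mapL T
  have hS := hf.mapL S
  simp only [h] at hT
  exact hT.unique hS

/-- Congruence for a fibred representation along equal fibres. -/
theorem pi_congr_fib {Γ : Type*} {B : Γ → Type*}
    {W : Type*} (π : ∀ x : Γ, B x → W)
    {u v : Γ} (huv : u = v) {a : B u} {c : B v} (hac : HEq a c) :
    π u a = π v c := by
  subst huv
  rw [eq_of_heq hac]

theorem single_congr_pair [DecidableEq ι] {i j : ι} (hij : i = j) {ξ η : H} (hv : ξ = η) :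
    (lp.single 2 i ξ : lp (fun _ : ι => H) 2) = lp.single 2 j η := by
  subst hij; subst hv; rfl

end PermAux

/-- The permutation of `Γ × Λ` given by left multiplication by `(e, h)` in the
Zappa–Szép product group. -/
def MatchedPairGrp.zperm {Γ Λ : Type*} [Group Γ] [Group Λ] (M : MatchedPairGrp Γ Λ)
    (h : Λ) : Γ × Λ ≃ Γ × Λ where
  toFun p := (M.act h p.1, M.res h p.1 * p.2)
  invFun p := (M.act h⁻¹ p.1, M.res h⁻¹ p.1 * p.2)
  left_inv p := by
    refine Prod.ext ?_ ?_
    · show M.act h⁻¹ (M.act h p.1) = p.1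
      rw [← M.mul_act, inv_mul_cancel, M.one_act]
    · show M.res h⁻¹ (M.act h p.1) * (M.res h p.1 * p.2) = p.2
      rw [M.res_inv_act, inv_mul_cancel_left]
  right_inv p := by
    refine Prod.ext ?_ ?_
    · exact M.act_act_inv h p.1
    · show M.res h (M.act h⁻¹ p.1) * (M.res h⁻¹ p.1 * p.2) = p.2
      rw [M.res_act_inv, inv_mul_cancel_left]

theorem MatchedPairGrp.zperm_mul {Γ Λ : Type*} [Group Γ] [Group Λ]
    (M : MatchedPairGrp Γ Λ) (g h : Λ) :
    M.zperm (g * h) = (M.zperm h).trans (M.zperm g) := by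
  refine Equiv.ext fun p => Prod.ext ?_ ?_
  · exact M.mul_act g h p.1
  · show M.res (g * h) p.1 * p.2 = M.res g (M.act h p.1) * (M.res h p.1 * p.2)
    rw [M.mul_res, mul_assoc]

theorem MatchedPairGrp.zperm_one {Γ Λ : Type*} [Group Γ] [Group Λ]
    (M : MatchedPairGrp Γ Λ) : M.zperm (1 : Λ) = Equiv.refl (Γ × Λ) := by
  refine Equiv.ext fun p => Prod.ext ?_ ?_
  · exact M.one_act p.1
  · show M.res 1 p.1 * p.2 = p.2
    rw [M.one_res, one_mul]

theorem MatchedPairGrp.zperm_inv {Γ Λ : Type*} [Group Γ] [Group Λ]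
    (M : MatchedPairGrp Γ Λ) (h : Λ) : M.zperm h⁻¹ = (M.zperm h).symm :=
  Equiv.ext fun _ => rfl

section Stmt16

open scoped Classical

/-- In the setting of the twisted amplification `Π` of a `*`-representation
`π` of a Fell bundle `B` over `Γ` (matched pair of discrete groups `(Γ,Λ)`),
the maps `M_h(δ_{(x,k)} ⊗ ξ) = δ_{(e,h)(x,k)} ⊗ ξ` (note
`(e,h)(x,k) = (h·x, h|_x k)`) extend to unitaries on `ℓ²(Γ ⋈ Λ) ⊗ H`,
`h ↦ M_h` is a unitary representation of `Λ`, and the covariance relation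
`M_h Π(b) = Π(β(h,b)) M_{h|_{p(b)}}` holds. -/
theorem amplification_covariance {Γ Λ : Type*} [Group Γ] [Group Λ]
    (M : MatchedPairGrp Γ Λ)
    (B : Γ → Type*) [∀ x, NormedAddCommGroup (B x)] [∀ x, NormedSpace ℂ (B x)]
    (F : FellBdlGrp Γ B) (A : CompatGrp M B F)
    {H : Type*} [NormedAddCommGroup H] [InnerProductSpace ℂ H] [CompleteSpace H]
    (π : ∀ x : Γ, B x → (H →L[ℂ] H))
    (hπ_add : ∀ (x : Γ) (a b : B x), π x (a + b) = π x a + π x b)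
    (hπ_smul : ∀ (x : Γ) (z : ℂ) (a : B x), π x (z • a) = z • π x a)
    (hπ_mul : ∀ (x y : Γ) (a : B x) (b : B y),
      π (x * y) (F.fmul a b) = π x a * π y b)
    (hπ_star : ∀ (x : Γ) (a : B x),
      π x⁻¹ (F.fstar a) = ContinuousLinearMap.adjoint (π x a))
    (hπ_norm : ∀ (x : Γ) (a : B x), ‖π x a‖ ≤ ‖a‖)
    -- the twisted amplification `Π` of `π`:
    (PiAmp : ∀ x₀ : Γ, B x₀ →
        (lp (fun _ : Γ × Λ => H) 2 →L[ℂ] lp (fun _ : Γ × Λ => H) 2))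
    (hPi : ∀ (x₀ : Γ) (b : B x₀) (x : Γ) (h : Λ) (ξ : H),
      PiAmp x₀ b (lp.single 2 (x, h) ξ) =
        lp.single 2 (x₀ * x, h)
          (π (M.act (M.res h⁻¹ (x₀ * x)⁻¹) x₀)
            (A.β (M.res h⁻¹ (x₀ * x)⁻¹) b) ξ)) :
    ∃ Mrep : Λ → (lp (fun _ : Γ × Λ => H) 2 →L[ℂ] lp (fun _ : Γ × Λ => H) 2),
      -- defining formula `M_h (δ_{(x,k)} ⊗ ξ) = δ_{(e,h)(x,k)} ⊗ ξ`:
      (∀ (h : Λ) (x : Γ) (k : Λ) (ξ : H),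
        Mrep h (lp.single 2 (x, k) ξ) =
          lp.single 2 (M.act h x, M.res h x * k) ξ) ∧
      -- each `M_h` is unitary (isometric and surjective):
      (∀ (h : Λ) (f : lp (fun _ : Γ × Λ => H) 2), ‖Mrep h f‖ = ‖f‖) ∧
      (∀ h : Λ, Function.Surjective (Mrep h)) ∧
      -- `M` is a unitary representation of `Λ`:
      (∀ g h : Λ, Mrep (g * h) = Mrep g * Mrep h) ∧
      (∀ h : Λ, ContinuousLinearMap.adjoint (Mrep h) = Mrep h⁻¹) ∧
      -- covariance:
      (∀ (h : Λ) (x : Γ) (b : B x),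
        Mrep h * PiAmp x b = PiAmp (M.act h x) (A.β h b) * Mrep (M.res h x)) := by
  classical
  have zperm_apply : ∀ (h : Λ) (x : Γ) (k : Λ),
      M.zperm h (x, k) = (M.act h x, M.res h x * k) := fun _ _ _ => rfl
  have hco : ∀ g h : Λ,
      (M.zperm g).symm.trans (M.zperm h).symm = (M.zperm (g * h)).symm := by
    intro g h
    rw [← M.zperm_inv, ← M.zperm_inv, ← M.zperm_inv, ← M.zperm_mul, mul_inv_rev]
  have hone : permCLM (H := H) (M.zperm (1 : Λ)).symm = 1 := by
    rw [M.zperm_one]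
    exact permCLM_refl
  have hmul : ∀ g h : Λ, permCLM (H := H) (M.zperm (g * h)).symm =
      permCLM (M.zperm g).symm * permCLM (M.zperm h).symm := by
    intro g h
    rw [permCLM_mul, hco]
  refine ⟨fun h => permCLM (M.zperm h).symm, ?_, ?_, ?_, ?_, ?_, ?_⟩
  · intro h x k ξ
    exact permCLM_symm_single (M.zperm h) (x, k) ξ
  · intro h f
    exact norm_permCLM _ f
  · intro h f
    refine ⟨permCLM (M.zperm h⁻¹).symm f, ?_⟩
    have : (permCLM (M.zperm h).symm) ((permCLM (M.zperm h⁻¹).symm) f) = f := by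
      rw [← ContinuousLinearMap.mul_apply, ← hmul, mul_inv_cancel, hone,
        ContinuousLinearMap.one_apply]
    exact this
  · intro g h
    exact hmul g h
  · intro h
    beta_reduce
    rw [permCLM_adjoint, M.zperm_inv]
  · intro h x b
    beta_reduce
    refine clm_ext_single fun p ξ => ?_
    obtain ⟨y, k⟩ := p
    rw [ContinuousLinearMap.mul_apply, ContinuousLinearMap.mul_apply,
      hPi x b y k ξ, permCLM_symm_single, permCLM_symm_single,
      zperm_apply, zperm_apply, hPi]
    have hn : M.res (M.res h (x * y)) (x * y)⁻¹ = h := by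
      rw [← M.res_mul, mul_inv_cancel, M.res_one]
    have key : M.res ((M.res (M.res h x) y * k)⁻¹)
        ((M.act h x * M.act (M.res h x) y)⁻¹) * h = M.res k⁻¹ (x * y)⁻¹ := by
      rw [← M.act_mul, ← M.res_mul, mul_inv_rev (M.res h (x * y)) k,
        M.inv_act_eq h (x * y), M.mul_res, ← M.mul_act, inv_mul_cancel, M.one_act,
        M.res_inv_act, hn, inv_mul_cancel_right]
    set m' := M.res ((M.res (M.res h x) y * k)⁻¹)
      ((M.act h x * M.act (M.res h x) y)⁻¹) with hm'
    refine single_congr_pair (Prod.ext ?_ ?_) ?_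
    · exact M.act_mul h x y
    · show M.res h (x * y) * k = M.res (M.res h x) y * k
      rw [M.res_mul]
    · have step : π (M.act m' (M.act h x)) (A.β m' (A.β h b))
          = π (M.act (M.res k⁻¹ (x * y)⁻¹) x) (A.β (M.res k⁻¹ (x * y)⁻¹) b) := by
        have h1 : π (M.act m' (M.act h x)) (A.β m' (A.β h b))
            = π (M.act (m' * h) x) (A.β (m' * h) b) :=
          pi_congr_fib _ (M.mul_act m' h x).symm (A.β_mul m' h b).symm
        rw [h1, key]
      rw [step]


end Stmt16
end

section
/- Let (Γ, Λ) be a matched pair of discrete groups with Λ-action h·x and Γ-restriction h|_x, let B be a Fell bundle over Γ with compatible Λ-action β, and suppose (π, M) is a covariant pair: π a *-representation of B on a Hilbert space H, M a unitary representation of Λ on H, with M_h π(b) = π(β(h,b)) M_{h|_{p(b)}} for all h, b. Then for finitely supported sections σ of B ⋈_β Λ, the map L(σ) = Σ_{(x,h)} π(σ_B(x,h)) M_h is a *-homomorphism from the convolution *-algebra of finitely supported sections of B ⋈_β Λ to B(H), i.e. L(σ □ τ) = L(σ)L(τ) and L(σ*) = L(σ)*, where σ_B(x,h) ∈ B_x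 denotes the B-component of σ(x,h). -/
section Sections

open MatchedPairGrp

variable {Γ Λ : Type*} [Group Γ] [Group Λ] (M : MatchedPairGrp Γ Λ)
  (B : Γ → Type*) [∀ x, NormedAddCommGroup (B x)] [∀ x, NormedSpace ℂ (B x)]
  (F : FellBdlGrp Γ B) (A : CompatGrp M B F)

/-- Convolution of (finitely supported) sections of the Fell bundle `B` over
the discrete group `Γ`: `(σ □ τ)(x) = Σ_y σ(y) τ(y⁻¹x)`. -/
noncomputable def convB (σ τ : ∀ x : Γ, B x) : ∀ x : Γ, B x :=
  fun x => ∑ᶠ y : Γ,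
    cast (congrArg B (mul_inv_cancel_left y x)) (F.fmul (σ y) (τ (y⁻¹ * x)))

/-- Involution of sections of `B`: `σ*(x) = σ(x⁻¹)*`. -/
def starB (σ : ∀ x : Γ, B x) : ∀ x : Γ, B x :=
  fun x => cast (congrArg B (inv_inv x)) (F.fstar (σ x⁻¹))

/-- A section of the Zappa–Szép product bundle `B ⋈_β Λ` over `Γ ⋈ Λ` is
recorded by its `B`-component: over `(x,h)` the fibre is `B x`.
Convolution of sections of `B ⋈_β Λ`:
`(σ □ τ)(ε) = Σ_φ σ(φ) • τ(φ⁻¹ε)`, where `•` is the Zappa–Szép bundle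
multiplication `(a,g) • (b,h) = (a β_g(b), g|_{p(b)} h)`. -/
noncomputable def convC (σ τ : ∀ p : Γ × Λ, B p.1) : ∀ p : Γ × Λ, B p.1 :=
  fun ε => ∑ᶠ φ : Γ × Λ,
    cast (congrArg (fun p : Γ × Λ => B p.1) (M.zmul_zinv_cancel_left φ ε))
      (F.fmul (σ φ) (A.β φ.2 (τ (M.zmul (M.zinv φ) ε))))

/-- Involution of sections of `B ⋈_β Λ`: `σ*(ε) = σ(ε⁻¹)*`, where for
`b ∈ B_x`, `(b,h)* = (β_{h⁻¹}(b*), h⁻¹|_{x⁻¹})`. -/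
def starC (σ : ∀ p : Γ × Λ, B p.1) : ∀ p : Γ × Λ, B p.1 :=
  fun ε => cast (congrArg B (M.zs_star_base ε.1 ε.2))
    (A.β (M.res ε.2⁻¹ ε.1⁻¹)⁻¹ (F.fstar (σ (M.zinv ε))))

end Sections

/-! On a single element `(b, h)` of `B ⋈_β Λ` the integrated form is `π(b) M_h`, and the
covariance condition `M_h π(b) = π(β_h b) M_{h|_x}` makes this assignment multiplicative and
`*`-preserving. Summing, `L(σ □ τ) = Σ_ε Σ_φ L(σ(φ)) L(τ(φ⁻¹ε))`, and the substitution
`ε = φ q` (left multiplication is a bijection of `Γ ⋈ Λ`) turns this into `L(σ) L(τ)`;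
likewise `L(σ*) = L(σ)*` follows by reindexing along the involution `ε ↦ ε⁻¹`. -/

theorem cast_zero_of_eq {ι : Type*} {B : ι → Type*} [∀ i, Zero (B i)] {i j : ι} (hij : i = j)
    (h : B i = B j) : cast h (0 : B i) = 0 := by
  subst hij
  rfl

theorem apply_cast_of_eq {ι γ : Type*} {B : ι → Type*} (f : ∀ i, B i → γ) {i j : ι}
    (hij : i = j) (h : B i = B j) (a : B i) : f j (cast h a) = f i a := by
  subst hij
  rfl

theorem finsum_comm_of_hasFiniteSupport {α β R : Type*} [AddCommMonoid R] {f : α → β → R}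
    (hf : Function.HasFiniteSupport (Function.uncurry f)) :
    ∑ᶠ a, ∑ᶠ b, f a b = ∑ᶠ b, ∑ᶠ a, f a b := by
  have hf' : Function.HasFiniteSupport (Function.uncurry (Function.swap f)) :=
    hf.preimage Prod.swap_injective.injOn
  calc ∑ᶠ a, ∑ᶠ b, f a b = ∑ᶠ ab, Function.uncurry f ab := (finsum_curry _ hf).symm
    _ = ∑ᶠ ba, Function.uncurry (Function.swap f) ba :=
        (finsum_comp_equiv (Equiv.prodComm β α)).symm
    _ = ∑ᶠ b, ∑ᶠ a, f a b := finsum_curry _ hf'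

namespace MatchedPairGrp

variable {Γ Λ : Type*} [Group Γ] [Group Λ] (M : MatchedPairGrp Γ Λ)

theorem zinv_zinv (p : Γ × Λ) : M.zinv (M.zinv p) = p := by
  obtain ⟨x, h⟩ := p
  refine Prod.ext (M.zs_star_base x h) ?_
  show M.res (M.res h⁻¹ x⁻¹)⁻¹ (M.act h⁻¹ x⁻¹)⁻¹ = h
  rw [inv_act_eq M h⁻¹ x⁻¹, inv_inv, res_inv_act, ← M.res_mul, inv_mul_cancel,
    M.res_one, inv_inv]

theorem zinv_zmul_cancel_left (p q : Γ × Λ) : M.zmul (M.zinv p) (M.zmul p q) = q := by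
  simpa only [M.zinv_zinv] using M.zmul_zinv_cancel_left (M.zinv p) q

def zmulLeft (p : Γ × Λ) : Equiv.Perm (Γ × Λ) where
  toFun := M.zmul p
  invFun := M.zmul (M.zinv p)
  left_inv := M.zinv_zmul_cancel_left p
  right_inv := M.zmul_zinv_cancel_left p

theorem finsum_finsum_mul_zmul_zinv {R : Type*} [NonUnitalNonAssocSemiring R]
    {f g : Γ × Λ → R} (hf : Function.HasFiniteSupport f) (hg : Function.HasFiniteSupport g) :
    ∑ᶠ ε, ∑ᶠ φ, f φ * g (M.zmul (M.zinv φ) ε) = (∑ᶠ φ, f φ) * ∑ᶠ q, g q := by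
  have hfg : Function.HasFiniteSupport
      (fun r : (Γ × Λ) × (Γ × Λ) => f r.1 * g (M.zmul (M.zinv r.1) r.2)) := by
    refine ((hf.prod hg).image fun r => (r.1, M.zmul r.1 r.2)).subset ?_
    rintro ⟨φ, ε⟩ hφε
    refine ⟨(φ, M.zmul (M.zinv φ) ε), ⟨left_ne_zero_of_mul hφε, right_ne_zero_of_mul hφε⟩, ?_⟩
    simp only [M.zmul_zinv_cancel_left]
  rw [← finsum_comm_of_hasFiniteSupport (f := fun φ ε => f φ * g (M.zmul (M.zinv φ) ε)) hfg,
    finsum_mul' _ _ hf]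
  refine finsum_congr fun φ => ?_
  rw [mul_finsum' _ _ hg]
  exact finsum_comp_equiv (M.zmulLeft (M.zinv φ)) (f := fun q => f φ * g q)

end MatchedPairGrp

theorem FellBdlGrp.zero_fmul {Γ : Type*} [Group Γ] {B : Γ → Type*}
    [∀ x, NormedAddCommGroup (B x)] [∀ x, NormedSpace ℂ (B x)] (F : FellBdlGrp Γ B)
    {x y : Γ} (b : B y) : F.fmul (0 : B x) b = 0 :=
  (AddMonoidHom.mk' (F.fmul · b) (F.add_fmul · · b)).map_zero

section Summand

variable {Γ Λ : Type*} (B : Γ → Type*) {Hs : Type*} [NormedAddCommGroup Hs] [NormedSpace ℂ Hs]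
  (π : ∀ x : Γ, B x → (Hs →L[ℂ] Hs)) (Mrep : Λ → (Hs →L[ℂ] Hs))

def lrepSummand (σ : ∀ p : Γ × Λ, B p.1) (p : Γ × Λ) : Hs →L[ℂ] Hs :=
  π p.1 (σ p) * Mrep p.2

theorem hasFiniteSupport_lrepSummand [∀ x, AddZeroClass (B x)]
    (hπ_add : ∀ (x : Γ) (a b : B x), π x (a + b) = π x a + π x b)
    {σ : ∀ p : Γ × Λ, B p.1} (hσ : {p : Γ × Λ | σ p ≠ 0}.Finite) :
    Function.HasFiniteSupport (lrepSummand B π Mrep σ) := by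
  refine hσ.subset fun p hp hσp => hp ?_
  have hπ_zero : π p.1 0 = 0 := map_zero (AddMonoidHom.mk' (π p.1) (hπ_add p.1))
  rw [lrepSummand, hσp, hπ_zero, zero_mul]

end Summand

section Covariant

variable {Γ Λ : Type*} [Group Γ] [Group Λ]
  (B : Γ → Type*) [∀ x, NormedAddCommGroup (B x)] [∀ x, NormedSpace ℂ (B x)]
  {Hs : Type*} [NormedAddCommGroup Hs] [NormedSpace ℂ Hs]
  {M : MatchedPairGrp Γ Λ} {F : FellBdlGrp Γ B} {A : CompatGrp M B F}
  (π : ∀ x : Γ, B x → (Hs →L[ℂ] Hs)) (Mrep : Λ → (Hs →L[ℂ] Hs))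

/-- The covariance condition makes `(b, h) ↦ π(b) M_h` multiplicative on `B ⋈_β Λ`. -/
theorem mul_cast_fmul_β
    (hπ_mul : ∀ (x y : Γ) (a : B x) (b : B y), π (x * y) (F.fmul a b) = π x a * π y b)
    (hM_mul : ∀ g h : Λ, Mrep (g * h) = Mrep g * Mrep h)
    (hcov : ∀ (h : Λ) (x : Γ) (b : B x),
      Mrep h * π x b = π (M.act h x) (A.β h b) * Mrep (M.res h x))
    {φ q ε : Γ × Λ} (hε : M.zmul φ q = ε) (h : B (M.zmul φ q).1 = B ε.1)
    (a : B φ.1) (b : B q.1) :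
    π ε.1 (cast h (F.fmul a (A.β φ.2 b))) * Mrep ε.2 =
      π φ.1 a * Mrep φ.2 * (π q.1 b * Mrep q.2) := by
  subst hε
  calc π (φ.1 * M.act φ.2 q.1) (F.fmul a (A.β φ.2 b)) * Mrep (M.res φ.2 q.1 * q.2)
      = π φ.1 a * (π (M.act φ.2 q.1) (A.β φ.2 b) * Mrep (M.res φ.2 q.1)) * Mrep q.2 := by
        rw [hπ_mul, hM_mul]
        simp only [mul_assoc]
    _ = π φ.1 a * Mrep φ.2 * (π q.1 b * Mrep q.2) := by
        rw [← hcov]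
        simp only [mul_assoc]

theorem lrepSummand_convC
    (hπ_add : ∀ (x : Γ) (a b : B x), π x (a + b) = π x a + π x b)
    (hπ_mul : ∀ (x y : Γ) (a : B x) (b : B y), π (x * y) (F.fmul a b) = π x a * π y b)
    (hM_mul : ∀ g h : Λ, Mrep (g * h) = Mrep g * Mrep h)
    (hcov : ∀ (h : Λ) (x : Γ) (b : B x),
      Mrep h * π x b = π (M.act h x) (A.β h b) * Mrep (M.res h x))
    {σ : ∀ p : Γ × Λ, B p.1} (hσ : {p : Γ × Λ | σ p ≠ 0}.Finite) (τ : ∀ p : Γ × Λ, B p.1)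
    (ε : Γ × Λ) :
    lrepSummand B π Mrep (convC M B F A σ τ) ε =
      ∑ᶠ φ, lrepSummand B π Mrep σ φ * lrepSummand B π Mrep τ (M.zmul (M.zinv φ) ε) := by
  have hsupp : Function.HasFiniteSupport fun φ : Γ × Λ =>
      cast (congrArg (fun p : Γ × Λ => B p.1) (M.zmul_zinv_cancel_left φ ε))
        (F.fmul (σ φ) (A.β φ.2 (τ (M.zmul (M.zinv φ) ε)))) := by
    refine hσ.subset fun φ hφ hσφ => hφ ?_
    dsimp only
    rw [hσφ, F.zero_fmul]
    exact cast_zero_of_eq (congrArg Prod.fst (M.zmul_zinv_cancel_left φ ε)) _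
  refine (((AddMonoidHom.mulRight (Mrep ε.2)).comp
    (AddMonoidHom.mk' (π ε.1) (hπ_add ε.1))).map_finsum hsupp).trans (finsum_congr fun φ => ?_)
  exact mul_cast_fmul_β B π Mrep hπ_mul hM_mul hcov (M.zmul_zinv_cancel_left φ ε) _ _ _

end Covariant

theorem lrepSummand_starC {Γ Λ : Type*} [Group Γ] [Group Λ]
    (B : Γ → Type*) [∀ x, NormedAddCommGroup (B x)] [∀ x, NormedSpace ℂ (B x)]
    {Hs : Type*} [NormedAddCommGroup Hs] [InnerProductSpace ℂ Hs] [CompleteSpace Hs]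
    {M : MatchedPairGrp Γ Λ} {F : FellBdlGrp Γ B} {A : CompatGrp M B F}
    (π : ∀ x : Γ, B x → (Hs →L[ℂ] Hs)) (Mrep : Λ → (Hs →L[ℂ] Hs))
    (hπ_star : ∀ (x : Γ) (a : B x),
      π x⁻¹ (F.fstar a) = ContinuousLinearMap.adjoint (π x a))
    (hM_star : ∀ h : Λ, ContinuousLinearMap.adjoint (Mrep h) = Mrep h⁻¹)
    (hcov : ∀ (h : Λ) (x : Γ) (b : B x),
      Mrep h * π x b = π (M.act h x) (A.β h b) * Mrep (M.res h x))
    (σ : ∀ p : Γ × Λ, B p.1) (ε : Γ × Λ) :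
    lrepSummand B π Mrep (starC M B F A σ) ε =
      ContinuousLinearMap.adjoint (lrepSummand B π Mrep σ (M.zinv ε)) := by
  have hres : M.res (M.zinv ε).2⁻¹ (M.zinv ε).1⁻¹ = ε.2 := congrArg Prod.snd (M.zinv_zinv ε)
  rw [lrepSummand, lrepSummand, starC, apply_cast_of_eq π (M.zs_star_base ε.1 ε.2),
    ← ContinuousLinearMap.star_eq_adjoint, star_mul, ContinuousLinearMap.star_eq_adjoint,
    ContinuousLinearMap.star_eq_adjoint, hM_star, ← hπ_star, hcov, hres]
  rfl

section Stmt19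

variable {Γ Λ : Type*} [Group Γ] [Group Λ]
  (B : Γ → Type*) [∀ x, NormedAddCommGroup (B x)] [∀ x, NormedSpace ℂ (B x)]
  {Hs : Type*} [NormedAddCommGroup Hs] [InnerProductSpace ℂ Hs] [CompleteSpace Hs]

/-- The integrated form of a covariant pair `(π, M)`:
`L(σ) = Σ_{(x,h)} π(σ_B(x,h)) M_h` (a finite sum for finitely supported
sections; `∑ᶠ` vanishes otherwise). -/
noncomputable def Lrep (π : ∀ x : Γ, B x → (Hs →L[ℂ] Hs))
    (Mrep : Λ → (Hs →L[ℂ] Hs)) (σ : ∀ p : Γ × Λ, B p.1) : Hs →L[ℂ] Hs :=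
  ∑ᶠ p : Γ × Λ, (π p.1 (σ p)) * Mrep p.2

theorem integrated_form_star_hom (M : MatchedPairGrp Γ Λ)
    (F : FellBdlGrp Γ B) (A : CompatGrp M B F)
    (π : ∀ x : Γ, B x → (Hs →L[ℂ] Hs))
    (hπ_add : ∀ (x : Γ) (a b : B x), π x (a + b) = π x a + π x b)
    (hπ_mul : ∀ (x y : Γ) (a : B x) (b : B y),
      π (x * y) (F.fmul a b) = π x a * π y b)
    (hπ_star : ∀ (x : Γ) (a : B x),
      π x⁻¹ (F.fstar a) = ContinuousLinearMap.adjoint (π x a))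
    (Mrep : Λ → (Hs →L[ℂ] Hs))
    (hM_mul : ∀ g h : Λ, Mrep (g * h) = Mrep g * Mrep h)
    (hM_star : ∀ h : Λ, ContinuousLinearMap.adjoint (Mrep h) = Mrep h⁻¹)
    (hcov : ∀ (h : Λ) (x : Γ) (b : B x),
      Mrep h * π x b = π (M.act h x) (A.β h b) * Mrep (M.res h x))
    (σ τ : ∀ p : Γ × Λ, B p.1)
    (hσ : {p : Γ × Λ | σ p ≠ 0}.Finite) (hτ : {p : Γ × Λ | τ p ≠ 0}.Finite) :
    Lrep B π Mrep (convC M B F A σ τ) = Lrep B π Mrep σ * Lrep B π Mrep τ ∧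
    Lrep B π Mrep (starC M B F A σ) =
      ContinuousLinearMap.adjoint (Lrep B π Mrep σ) := by
  constructor
  · calc Lrep B π Mrep (convC M B F A σ τ)
        = ∑ᶠ ε, ∑ᶠ φ, lrepSummand B π Mrep σ φ *
            lrepSummand B π Mrep τ (M.zmul (M.zinv φ) ε) :=
          finsum_congr (lrepSummand_convC B π Mrep hπ_add hπ_mul hM_mul hcov hσ τ)
      _ = Lrep B π Mrep σ * Lrep B π Mrep τ :=
          M.finsum_finsum_mul_zmul_zinv (hasFiniteSupport_lrepSummand B π Mrep hπ_add hσ)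
            (hasFiniteSupport_lrepSummand B π Mrep hπ_add hτ)
  · calc Lrep B π Mrep (starC M B F A σ)
        = ∑ᶠ ε, ContinuousLinearMap.adjoint (lrepSummand B π Mrep σ (M.zinv ε)) :=
          finsum_congr (lrepSummand_starC B π Mrep hπ_star hM_star hcov σ)
      _ = ∑ᶠ p, ContinuousLinearMap.adjoint (lrepSummand B π Mrep σ p) :=
          finsum_comp_equiv (Function.Involutive.toPerm M.zinv M.zinv_zinv)
            (f := fun p => ContinuousLinearMap.adjoint (lrepSummand B π Mrep σ p))
      _ = ContinuousLinearMap.adjoint (Lrep B π Mrep σ) :=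
          (AddEquivClass.map_finsum ContinuousLinearMap.adjoint _).symm

end Stmt19
end
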